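/- arXiv:2107.11917 — 7 statements merged into one kernel-verified Lean document; each statement's English description precedes it below -/
import Mathlib

section
/- Let λ ∈ ℝ, T ∈ (0,∞], and let u, m : [0,T) × S¹ → ℝ be C¹ functions (with no assumed relation between m and u) satisfying the transport law m_t + u m_θ + λ u_θ m = 0 on [0,T) × S¹. Suppose the Lagrangian flow η of u is defined on [0,T) × S¹, is C¹ in (t,θ), and satisfies η_θ(t,θ) > 0. Then for every t ∈ [0,T) and θ ∈ S¹, η_θ(t,θ)^λ · m(t, η(t,θ)) = m(0,θ). -/
/-!
Along each trajectory, `η_θ(t, θ) ^ λ * m(t, η(t, θ))` has zero time derivative. Differentiating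
the integrated flow equation `η(t, θ) = θ + ∫₀ᵗ u(s, η(s, θ)) ds` in `θ` under the integral sign
gives the variational equation `∂ₜ η_θ = u_θ(t, η) η_θ`, while the chain rule and the transport law
give `∂ₜ [m(t, η)] = -λ u_θ(t, η) m(t, η)`; the two logarithmic derivatives cancel.
-/

open Set Filter Topology Asymptotics Function intervalIntegral

theorem isLittleO_sub_sub_mul_sub_of_tendsto_deriv {α : Type*} {l : Filter α}
    {f f₂ : α → ℝ → ℝ} {w : α → ℝ} {y₀ c : ℝ} (hw : Tendsto w l (𝓝 y₀))
    (hf : ∀ᶠ r in l, ∀ y, HasDerivAt (f r) (f₂ r y) y)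
    (hc : Tendsto (uncurry f₂) (l ×ˢ 𝓝 y₀) (𝓝 c)) :
    (fun r => f r (w r) - f r y₀ - c * (w r - y₀)) =o[l] (fun r => w r - y₀) := by
  refine isLittleO_iff.2 fun ε hε => ?_
  obtain ⟨pa, hpa, pb, hpb, hp⟩ := eventually_prod_iff.1
    (hc.eventually (Metric.closedBall_mem_nhds c hε))
  obtain ⟨δ, hδ, hball⟩ := Metric.eventually_nhds_iff_ball.1 hpb
  filter_upwards [hpa, hf, hw.eventually (Metric.ball_mem_nhds y₀ hδ)] with r hra hrf hrw
  have := (convex_ball y₀ δ).norm_image_sub_le_of_norm_hasDerivWithin_le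
    (f := fun y => f r y - c * y) (f' := fun y => f₂ r y - c)
    (fun y _ => ((hrf y).sub ((hasDerivAt_id y).const_mul c)).hasDerivWithinAt.congr_deriv
      (by simp))
    (fun y hy => by simpa [dist_eq_norm] using hp hra (hball y hy)) (Metric.mem_ball_self hδ) hrw
  rwa [show f r (w r) - c * w r - (f r y₀ - c * y₀) = f r (w r) - f r y₀ - c * (w r - y₀) by
    ring] at this

theorem hasDerivWithinAt_comp_curve {s : Set ℝ} {f f₂ : ℝ → ℝ → ℝ} {ψ : ℝ → ℝ} {t a v : ℝ}
    (hψ : HasDerivWithinAt ψ v s t)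
    (hf₁ : HasDerivWithinAt (fun r => f r (ψ t)) a s t)
    (hf₂ : ∀ r ∈ s, ∀ y, HasDerivAt (f r) (f₂ r y) y)
    (hf₂c : ContinuousWithinAt (uncurry f₂) (s ×ˢ univ) (t, ψ t)) :
    HasDerivWithinAt (fun r => f r (ψ r)) (a + f₂ t (ψ t) * v) s t := by
  have hf₂c' : Tendsto (uncurry f₂) (𝓝[s] t ×ˢ 𝓝 (ψ t)) (𝓝 (f₂ t (ψ t))) := by
    simpa [ContinuousWithinAt, nhdsWithin_prod_eq] using hf₂c
  have hsplit := (isLittleO_sub_sub_mul_sub_of_tendsto_deriv hψ.continuousWithinAt.tendsto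
    (eventually_mem_nhdsWithin.mono hf₂) hf₂c').trans_isBigO hψ.hasFDerivWithinAt.isBigO_sub
  rw [hasDerivWithinAt_iff_isLittleO] at hψ hf₁ ⊢
  refine (hsplit.add (hf₁.add (hψ.const_mul_left (f₂ t (ψ t))))).congr_left fun r => ?_
  simp only [smul_eq_mul]
  ring

theorem IsCompact.exists_bound_of_hasDerivAt_snd {K : Set ℝ} (hK : IsCompact K)
    {g g' : ℝ → ℝ → ℝ} (hg : ∀ s ∈ K, ∀ θ, HasDerivAt (g s) (g' s θ) θ)
    (hg' : ContinuousOn (uncurry g') (K ×ˢ univ)) {θ₀ : ℝ} (hg₀ : ContinuousOn (g · θ₀) K)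
    (r : ℝ) : ∃ R, ∀ s ∈ K, ∀ θ ∈ Metric.closedBall θ₀ r, ‖g s θ‖ ≤ R := by
  obtain ⟨C, hC⟩ := hK.exists_bound_of_continuousOn hg₀
  obtain ⟨M, hM⟩ := (hK.prod (isCompact_closedBall θ₀ r)).exists_bound_of_continuousOn
    (hg'.mono (prod_mono_right (subset_univ _)))
  refine ⟨C + max M 0 * r, fun s hs θ hθ => ?_⟩
  have hlip : ‖g s θ - g s θ₀‖ ≤ max M 0 * ‖θ - θ₀‖ :=
    (convex_closedBall θ₀ r).norm_image_sub_le_of_norm_hasDerivWithin_le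
      (fun y _ => (hg s hs y).hasDerivWithinAt)
      (fun y hy => (hM (s, y) ⟨hs, hy⟩).trans (le_max_left _ _))
      (Metric.mem_closedBall_self ((dist_nonneg).trans hθ)) hθ
  calc ‖g s θ‖ ≤ ‖g s θ₀‖ + ‖g s θ - g s θ₀‖ := norm_le_norm_add_norm_sub' _ _
    _ ≤ C + max M 0 * r := add_le_add (hC s hs)
        (hlip.trans (mul_le_mul_of_nonneg_left (by simpa [dist_eq_norm] using hθ)
          (le_max_right _ _)))

theorem ContinuousOn.comp_curve {I : Set ℝ} {g : ℝ → ℝ → ℝ} {ψ : ℝ → ℝ}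
    (hg : ContinuousOn (uncurry g) (I ×ˢ univ)) (hψ : ContinuousOn ψ I) :
    ContinuousOn (fun s => g s (ψ s)) I :=
  hg.comp (continuousOn_id.prodMk hψ) fun _ hs => ⟨hs, mem_univ _⟩

theorem hasDerivWithinAt_integral_Icc {f : ℝ → ℝ} {a b x : ℝ} (hf : ContinuousOn f (Icc a b))
    (hx : x ∈ Icc a b) : HasDerivWithinAt (fun r => ∫ s in a..r, f s) (f x) (Icc a b) x := by
  have := Fact.mk hx -- for the `FTCFilter` instance on `𝓝[Icc a b] x`
  exact integral_hasDerivWithinAt_right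
    ((hf.mono (Icc_subset_Icc_right hx.2)).intervalIntegrable_of_Icc hx.1)
    (hf.stronglyMeasurableAtFilter_nhdsWithin measurableSet_Icc x) (hf x hx)

section Flow

variable {τ : ℝ} {u uθ η ηθ : ℝ → ℝ → ℝ}

theorem flow_eq_add_integral (hu : ContinuousOn (uncurry u) (Icc 0 τ ×ˢ univ))
    (hη0 : ∀ θ, η 0 θ = θ)
    (hηt : ∀ θ, ∀ t ∈ Icc 0 τ, HasDerivWithinAt (η · θ) (u t (η t θ)) (Icc 0 τ) t)
    {t : ℝ} (ht : t ∈ Icc 0 τ) (θ : ℝ) : η t θ = θ + ∫ s in 0..t, u s (η s θ) := by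
  have hsub : Icc 0 t ⊆ Icc 0 τ := Icc_subset_Icc_right ht.2
  have hηc : ContinuousOn (η · θ) (Icc 0 τ) := fun s hs => (hηt θ s hs).continuousWithinAt
  rw [integral_eq_sub_of_hasDerivAt_of_le ht.1 (hηc.mono hsub)
    (fun s hs => (hηt θ s (hsub (Ioo_subset_Icc_self hs))).hasDerivAt
      (Icc_mem_nhds hs.1 (hs.2.trans_le ht.2)))
    (((hu.comp_curve hηc).mono hsub).intervalIntegrable_of_Icc ht.1), hη0]
  ring

theorem flow_deriv_eq_one_add_integral (hu : ContinuousOn (uncurry u) (Icc 0 τ ×ˢ univ))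
    (huθ : ∀ s ∈ Icc 0 τ, ∀ y, HasDerivAt (u s) (uθ s y) y)
    (huθc : ContinuousOn (uncurry uθ) (Icc 0 τ ×ˢ univ)) (hη0 : ∀ θ, η 0 θ = θ)
    (hηt : ∀ θ, ∀ t ∈ Icc 0 τ, HasDerivWithinAt (η · θ) (u t (η t θ)) (Icc 0 τ) t)
    (hηθ : ∀ t ∈ Icc 0 τ, ∀ θ, HasDerivAt (η t) (ηθ t θ) θ)
    (hηθc : ContinuousOn (uncurry ηθ) (Icc 0 τ ×ˢ univ)) {t : ℝ} (ht : t ∈ Icc 0 τ) (θ₀ : ℝ) :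
    ηθ t θ₀ = 1 + ∫ s in 0..t, uθ s (η s θ₀) * ηθ s θ₀ := by
  have hsub : uIoc 0 t ⊆ Icc 0 τ := by
    rw [uIoc_of_le ht.1]
    exact Ioc_subset_Icc_self.trans (Icc_subset_Icc_right ht.2)
  have hηc : ∀ θ, ContinuousOn (η · θ) (Icc 0 τ) := fun θ s hs => (hηt θ s hs).continuousWithinAt
  have hF'c : ContinuousOn (fun s => uθ s (η s θ₀) * ηθ s θ₀) (Icc 0 τ) :=
    (huθc.comp_curve (hηc θ₀)).mul (hηθc.comp_curve continuousOn_const)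
  -- Domination: `η` is bounded on `[0, τ] × [θ₀ - 1, θ₀ + 1]`, hence so is `uθ` along it.
  obtain ⟨R, hR⟩ := isCompact_Icc.exists_bound_of_hasDerivAt_snd hηθ hηθc (hηc θ₀) 1
  obtain ⟨M₁, hM₁⟩ := (isCompact_Icc.prod (isCompact_closedBall 0 R)).exists_bound_of_continuousOn
    (huθc.mono (prod_mono_right (subset_univ _)))
  obtain ⟨M₂, hM₂⟩ := (isCompact_Icc.prod (isCompact_closedBall θ₀ 1)).exists_bound_of_continuousOn
    (hηθc.mono (prod_mono_right (subset_univ _)))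
  have hdom := hasDerivAt_integral_of_dominated_loc_of_deriv_le (μ := MeasureTheory.volume)
    (F := fun θ s => u s (η s θ)) (F' := fun θ s => uθ s (η s θ) * ηθ s θ) (bound := fun _ => M₁ * M₂)
    (Metric.closedBall_mem_nhds θ₀ one_pos)
    (.of_forall fun θ => ((hu.comp_curve (hηc θ)).mono hsub).aestronglyMeasurable measurableSet_uIoc)
    ((hu.comp_curve (hηc θ₀)).mono (uIcc_of_le ht.1 ▸ Icc_subset_Icc_right ht.2)).intervalIntegrable
    ((hF'c.mono hsub).aestronglyMeasurable measurableSet_uIoc)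
    (.of_forall fun s hs θ hθ => norm_mul_le_of_le
      (hM₁ (s, η s θ) ⟨hsub hs, by simpa using hR s (hsub hs) θ hθ⟩) (hM₂ (s, θ) ⟨hsub hs, hθ⟩))
    intervalIntegrable_const
    (.of_forall fun s hs θ _ => (huθ s (hsub hs) (η s θ)).comp θ (hηθ s (hsub hs) θ))
  have hG : HasDerivAt (fun θ => ∫ s in 0..t, u s (η s θ)) (ηθ t θ₀ - 1) θ₀ := by
    have hG_eq : (fun θ => ∫ s in 0..t, u s (η s θ)) = fun θ => η t θ - θ :=
      funext fun θ => by rw [flow_eq_add_integral hu hη0 hηt ht θ]; ring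
    rw [hG_eq]
    exact (hηθ t ht θ₀).sub (hasDerivAt_id θ₀)
  linarith [hdom.2.unique hG]

theorem hasDerivWithinAt_flow_deriv (hu : ContinuousOn (uncurry u) (Icc 0 τ ×ˢ univ))
    (huθ : ∀ s ∈ Icc 0 τ, ∀ y, HasDerivAt (u s) (uθ s y) y)
    (huθc : ContinuousOn (uncurry uθ) (Icc 0 τ ×ˢ univ)) (hη0 : ∀ θ, η 0 θ = θ)
    (hηt : ∀ θ, ∀ t ∈ Icc 0 τ, HasDerivWithinAt (η · θ) (u t (η t θ)) (Icc 0 τ) t)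
    (hηθ : ∀ t ∈ Icc 0 τ, ∀ θ, HasDerivAt (η t) (ηθ t θ) θ)
    (hηθc : ContinuousOn (uncurry ηθ) (Icc 0 τ ×ˢ univ)) {t : ℝ} (ht : t ∈ Icc 0 τ) (θ : ℝ) :
    HasDerivWithinAt (ηθ · θ) (uθ t (η t θ) * ηθ t θ) (Icc 0 τ) t := by
  have hb : ContinuousOn (fun s => uθ s (η s θ) * ηθ s θ) (Icc 0 τ) :=
    (huθc.comp_curve fun s hs => (hηt θ s hs).continuousWithinAt).mul
      (hηθc.comp_curve continuousOn_const)
  exact ((hasDerivWithinAt_integral_Icc hb ht).const_add 1).congr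
    (fun s hs => flow_deriv_eq_one_add_integral hu huθ huθc hη0 hηt hηθ hηθc hs θ)
    (flow_deriv_eq_one_add_integral hu huθ huθc hη0 hηt hηθ hηθc ht θ)

end Flow

theorem hasDerivWithinAt_rpow_mul_eq_zero {y g : ℝ → ℝ} {s : Set ℝ} {t a lam : ℝ}
    (hy : HasDerivWithinAt y (a * y t) s t) (hg : HasDerivWithinAt g (-(lam * a * g t)) s t)
    (hpos : 0 < y t) : HasDerivWithinAt (fun r => y r ^ lam * g r) 0 s t := by
  refine ((hy.rpow_const (Or.inl hpos.ne')).mul hg).congr_deriv ?_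
  rw [show y t ^ lam = y t ^ (lam - 1) * y t by rw [← Real.rpow_add_one hpos.ne']; ring_nf]
  ring

theorem stmt_2_general (lam : ℝ) (T : EReal)
    (J : Set ℝ) (hJ : J = {t : ℝ | 0 ≤ t ∧ (t : EReal) < T})
    (u m uθ mt mθ : ℝ → ℝ → ℝ)
    -- u, m are C¹ in (t,θ): partial derivatives exist and are continuous
    (huθ : ∀ t ∈ J, ∀ θ : ℝ, HasDerivAt (u t) (uθ t θ) θ)
    (hmt : ∀ θ : ℝ, ∀ t ∈ J, HasDerivWithinAt (fun s => m s θ) (mt t θ) J t)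
    (hmθ : ∀ t ∈ J, ∀ θ : ℝ, HasDerivAt (m t) (mθ t θ) θ)
    (hucont : ContinuousOn (fun p : ℝ × ℝ => u p.1 p.2) (J ×ˢ univ))
    (huθcont : ContinuousOn (fun p : ℝ × ℝ => uθ p.1 p.2) (J ×ˢ univ))
    (hmθcont : ContinuousOn (fun p : ℝ × ℝ => mθ p.1 p.2) (J ×ˢ univ))
    -- the transport law
    (hPDE : ∀ t ∈ J, ∀ θ : ℝ, mt t θ + u t θ * mθ t θ + lam * uθ t θ * m t θ = 0)
    -- the Lagrangian flow η, C¹ in (t,θ), with η_θ > 0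
    (η ηθ : ℝ → ℝ → ℝ)
    (hη0 : ∀ θ : ℝ, η 0 θ = θ)
    (hηt : ∀ θ : ℝ, ∀ t ∈ J, HasDerivWithinAt (fun s => η s θ) (u t (η t θ)) J t)
    (hηθ : ∀ t ∈ J, ∀ θ : ℝ, HasDerivAt (η t) (ηθ t θ) θ)
    (hηθcont : ContinuousOn (fun p : ℝ × ℝ => ηθ p.1 p.2) (J ×ˢ univ))
    (hηθpos : ∀ t ∈ J, ∀ θ : ℝ, 0 < ηθ t θ) :
    ∀ t ∈ J, ∀ θ : ℝ, ηθ t θ ^ lam * m t (η t θ) = m 0 θ := by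
  intro t ht θ
  obtain ⟨h0t, htT⟩ : 0 ≤ t ∧ (t : EReal) < T := by rwa [hJ] at ht
  have hsub : Icc 0 t ⊆ J := by
    rw [hJ]
    exact fun s hs => ⟨hs.1, (EReal.coe_le_coe_iff.2 hs.2).trans_lt htT⟩
  have hηt' : ∀ θ, ∀ s ∈ Icc 0 t, HasDerivWithinAt (η · θ) (u s (η s θ)) (Icc 0 t) s :=
    fun θ s hs => (hηt θ s (hsub hs)).mono hsub
  have hE : ∀ s ∈ Icc 0 t,
      HasDerivWithinAt (fun r => ηθ r θ ^ lam * m r (η r θ)) 0 (Icc 0 t) s := by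
    intro s hs
    refine hasDerivWithinAt_rpow_mul_eq_zero (hasDerivWithinAt_flow_deriv
      (hucont.mono (prod_mono_left hsub)) (fun r hr => huθ r (hsub hr))
      (huθcont.mono (prod_mono_left hsub)) hη0 hηt' (fun r hr => hηθ r (hsub hr))
      (hηθcont.mono (prod_mono_left hsub)) hs θ) ?_ (hηθpos s (hsub hs) θ)
    convert hasDerivWithinAt_comp_curve (hηt' θ s hs) ((hmt _ s (hsub hs)).mono hsub)
      (fun r hr => hmθ r (hsub hr)) ((hmθcont _ ⟨hsub hs, mem_univ _⟩).mono (prod_mono_left hsub))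
      using 1
    linarith [hPDE s (hsub hs) (η s θ)]
  have hηθ0 : ηθ 0 θ = 1 :=
    (hηθ 0 (hsub (left_mem_Icc.2 h0t)) θ).unique ((hasDerivAt_id θ).congr_of_eventuallyEq (.of_forall hη0))
  simpa [hηθ0, hη0, sub_eq_zero] using
    norm_image_sub_le_of_norm_deriv_le_segment' hE (fun _ _ => norm_zero.le) t (right_mem_Icc.2 h0t)

/-- vorticity transport formula η_θ^λ · m(t, η(t,θ)) = m(0,θ) for any
transport law m_t + u m_θ + λ u_θ m = 0, regardless of the relation between m and u. -/
theorem stmt_2 (lam : ℝ) (T : EReal) (hT : 0 < T)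
    (J : Set ℝ) (hJ : J = {t : ℝ | 0 ≤ t ∧ (t : EReal) < T})
    (u m ut uθ mt mθ : ℝ → ℝ → ℝ)
    (huper : ∀ t ∈ J, ∀ θ : ℝ, u t (θ + 1) = u t θ)
    (hmper : ∀ t ∈ J, ∀ θ : ℝ, m t (θ + 1) = m t θ)
    -- u, m are C¹ in (t,θ): partial derivatives exist and are continuous
    (hut : ∀ θ : ℝ, ∀ t ∈ J, HasDerivWithinAt (fun s => u s θ) (ut t θ) J t)
    (huθ : ∀ t ∈ J, ∀ θ : ℝ, HasDerivAt (u t) (uθ t θ) θ)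
    (hmt : ∀ θ : ℝ, ∀ t ∈ J, HasDerivWithinAt (fun s => m s θ) (mt t θ) J t)
    (hmθ : ∀ t ∈ J, ∀ θ : ℝ, HasDerivAt (m t) (mθ t θ) θ)
    (hucont : ContinuousOn (fun p : ℝ × ℝ => u p.1 p.2) (J ×ˢ univ))
    (hmcont : ContinuousOn (fun p : ℝ × ℝ => m p.1 p.2) (J ×ˢ univ))
    (hutcont : ContinuousOn (fun p : ℝ × ℝ => ut p.1 p.2) (J ×ˢ univ))
    (huθcont : ContinuousOn (fun p : ℝ × ℝ => uθ p.1 p.2) (J ×ˢ univ))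
    (hmtcont : ContinuousOn (fun p : ℝ × ℝ => mt p.1 p.2) (J ×ˢ univ))
    (hmθcont : ContinuousOn (fun p : ℝ × ℝ => mθ p.1 p.2) (J ×ˢ univ))
    -- the transport law
    (hPDE : ∀ t ∈ J, ∀ θ : ℝ, mt t θ + u t θ * mθ t θ + lam * uθ t θ * m t θ = 0)
    -- the Lagrangian flow η, C¹ in (t,θ), with η_θ > 0
    (η ηθ : ℝ → ℝ → ℝ)
    (hη0 : ∀ θ : ℝ, η 0 θ = θ)
    (hηt : ∀ θ : ℝ, ∀ t ∈ J, HasDerivWithinAt (fun s => η s θ) (u t (η t θ)) J t)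
    (hηθ : ∀ t ∈ J, ∀ θ : ℝ, HasDerivAt (η t) (ηθ t θ) θ)
    (hηθcont : ContinuousOn (fun p : ℝ × ℝ => ηθ p.1 p.2) (J ×ˢ univ))
    (hηθpos : ∀ t ∈ J, ∀ θ : ℝ, 0 < ηθ t θ) :
    ∀ t ∈ J, ∀ θ : ℝ, ηθ t θ ^ lam * m t (η t θ) = m 0 θ :=
  stmt_2_general lam T J hJ u m uθ mt mθ huθ hmt hmθ hucont huθcont hmθcont hPDE η ηθ hη0 hηt hηθ
    hηθcont hηθpos
end

section
/- Let λ ∈ ℝ, T ∈ (0,∞], and let u : [0,T) × S¹ → ℝ be C³ in θ and C¹ in t (with the mixed partial derivatives u_tθ, u_tθθ continuous) solving the μ-λ equation with momentum m(t,θ) = σ(t) − u_θθ(t,θ), where σ(t) = ∫₀¹ u(t,θ) dθ. Then: (i) σ'(t) = 0 for all t, so σ is constant; and (ii) for all (t,θ) ∈ [0,T) × S¹, u_tθ + u u_θθ + ((λ−1)/2) u_θ² − λσu = I(t), where I(t) = ((λ−3)/2) E(t) − λσ² and E(t) = ∫₀¹ u_θ(t,θ)² dθ. -/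
/-!
Write `σ = ∫₀¹ u` and `H = u_tθ + u u_θθ + ((λ-1)/2) u_θ² - λσu`. Differentiating under the
integral sign in `t` shows that `u_tθ(t, ·)` is `1`-periodic with mean zero and has `θ`-derivative
`u_tθθ(t, ·)`; the μ-λ equation then says exactly that `∂_θ H = σ'`. As `H(t, ·)` is periodic,
`σ' = 0`, so `H(t, ·)` is constant and equals its mean over a period, which integration by parts
(`∫₀¹ u u_θθ = -E`) evaluates to `((λ-3)/2) E - λσ²`.
-/

open Set Function MeasureTheory intervalIntegral Filter

section ParametricIntegral

variable {E : Type*} [NormedAddCommGroup E] [NormedSpace ℝ E]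

theorem hasDerivWithinAt_intervalIntegral_of_continuousOn {v vt : ℝ → ℝ → E} {s : Set ℝ}
    {a b t : ℝ} (hs : Convex ℝ s) (ht : t ∈ s)
    (hv : ∀ θ ∈ uIcc a b, ∀ x ∈ s, HasDerivWithinAt (v · θ) (vt x θ) s x)
    (hvt : ContinuousOn (uncurry vt) (s ×ˢ uIcc a b))
    (hvi : ∀ x ∈ s, IntervalIntegrable (v x) volume a b) :
    HasDerivWithinAt (fun x => ∫ θ in a..b, v x θ) (∫ θ in a..b, vt t θ) s t := by
  have hvti : IntervalIntegrable (vt t) volume a b :=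
    (hvt.comp (continuousOn_const.prodMk continuousOn_id) fun θ hθ => ⟨ht, hθ⟩).intervalIntegrable
  rw [hasDerivWithinAt_iff_isLittleO, Asymptotics.isLittleO_iff]
  intro c hc
  set ε := c / (|b - a| + 1)
  have hεc : ε * |b - a| ≤ c := by
    rw [div_mul_eq_mul_div, div_le_iff₀ (by positivity)]
    nlinarith [abs_nonneg (b - a)]
  -- `vt x ·` is uniformly `ε`-close to `vt t ·` on `[a, b]` for `x` near `t`
  obtain ⟨U, hU, hUε⟩ := isCompact_uIcc.mem_uniformity_of_prod hvt ht
    (Metric.dist_mem_uniformity (show 0 < ε by positivity))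
  obtain ⟨δ, hδ, hδU⟩ := Metric.mem_nhdsWithin_iff.1 hU
  filter_upwards [inter_mem_nhdsWithin s (Metric.ball_mem_nhds t hδ)] with x hx
  have hS : Convex ℝ (s ∩ Metric.ball t δ) := hs.inter (convex_ball t δ)
  have hpt : ∀ θ ∈ uIoc a b, ‖v x θ - v t θ - (x - t) • vt t θ‖ ≤ ε * ‖x - t‖ := by
    intro θ hθ
    have hθ' := uIoc_subset_uIcc hθ
    have hmvt := hS.norm_image_sub_le_of_norm_hasDerivWithin_le
      (f := fun y => v y θ - y • vt t θ) (f' := fun y => vt y θ - vt t θ) (C := ε)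
      (fun y hy => by
        simpa using ((hv θ hθ' y hy.1).mono inter_subset_left).fun_sub
          ((hasDerivWithinAt_id y _).smul_const (vt t θ)))
      (fun y hy => by
        have hclose : dist (vt y θ) (vt t θ) < ε := hUε y (hδU ⟨hy.2, hy.1⟩) θ hθ'
        exact (dist_eq_norm (vt y θ) (vt t θ) ▸ hclose).le)
      ⟨ht, Metric.mem_ball_self hδ⟩ hx
    calc ‖v x θ - v t θ - (x - t) • vt t θ‖
        = ‖(v x θ - x • vt t θ) - (v t θ - t • vt t θ)‖ := by rw [sub_smul]; abel_nf
      _ ≤ ε * ‖x - t‖ := hmvt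
  calc ‖(∫ θ in a..b, v x θ) - (∫ θ in a..b, v t θ) - (x - t) • ∫ θ in a..b, vt t θ‖
      = ‖∫ θ in a..b, v x θ - v t θ - (x - t) • vt t θ‖ := by
        rw [integral_sub (f := fun θ => v x θ - v t θ) (g := fun θ => (x - t) • vt t θ)
            ((hvi x hx.1).sub (hvi t ht)) (hvti.smul (x - t)),
          integral_sub (hvi x hx.1) (hvi t ht), intervalIntegral.integral_smul]
    _ ≤ ε * ‖x - t‖ * |b - a| := norm_integral_le_of_norm_le_const hpt
    _ ≤ c * ‖x - t‖ := by nlinarith [norm_nonneg (x - t)]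

theorem intervalIntegral_paramDeriv_eq_zero {v vt : ℝ → ℝ → E} {s : Set ℝ}
    {a b t : ℝ} (hs : Convex ℝ s) (hus : UniqueDiffWithinAt ℝ s t) (ht : t ∈ s)
    (hv : ∀ θ ∈ uIcc a b, ∀ x ∈ s, HasDerivWithinAt (v · θ) (vt x θ) s x)
    (hvt : ContinuousOn (uncurry vt) (s ×ˢ uIcc a b))
    (hvi : ∀ x ∈ s, IntervalIntegrable (v x) volume a b)
    (hv0 : ∀ x ∈ s, ∫ θ in a..b, v x θ = 0) :
    ∫ θ in a..b, vt t θ = 0 :=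
  hus.eq_deriv _ (hasDerivWithinAt_intervalIntegral_of_continuousOn hs ht hv hvt hvi)
    ((hasDerivWithinAt_const t s 0).congr hv0 (hv0 t ht))

theorem periodic_paramDeriv {v : ℝ → ℝ → E} {vt : ℝ → E} {s : Set ℝ} {t c : ℝ}
    (hus : UniqueDiffWithinAt ℝ s t) (ht : t ∈ s) (hv : ∀ x ∈ s, Periodic (v x) c)
    (hvt : ∀ θ, HasDerivWithinAt (v · θ) (vt θ) s t) : Periodic vt c := fun θ =>
  hus.eq_deriv _ (hvt (θ + c)) ((hvt θ).congr (fun x hx => hv x hx θ) (hv t ht θ))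

variable [CompleteSpace E]

theorem hasDerivAt_paramDeriv_of_continuousOn {v w vt wt : ℝ → ℝ → E} {s : Set ℝ} {t : ℝ}
    (hs : Convex ℝ s) (hus : UniqueDiffWithinAt ℝ s t) (ht : t ∈ s)
    (hvw : ∀ x ∈ s, ∀ θ, HasDerivAt (v x) (w x θ) θ) (hw : ∀ x ∈ s, Continuous (w x))
    (hvt : ∀ θ, ∀ x ∈ s, HasDerivWithinAt (v · θ) (vt x θ) s x)
    (hwt : ∀ θ, ∀ x ∈ s, HasDerivWithinAt (w · θ) (wt x θ) s x)
    (hwtc : ContinuousOn (uncurry wt) (s ×ˢ univ)) (θ : ℝ) :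
    HasDerivAt (vt t) (wt t θ) θ := by
  have hFTC : ∀ x ∈ s, ∀ θ, ∫ φ in 0..θ, w x φ = v x θ - v x 0 := fun x hx θ =>
    integral_eq_sub_of_hasDerivAt (fun φ _ => hvw x hx φ) ((hw x hx).intervalIntegrable _ _)
  -- differentiate `∫ φ in 0..θ, w x φ = v x θ - v x 0` in the parameter `x`
  have hwt_int : ∀ θ, ∫ φ in 0..θ, wt t φ = vt t θ - vt t 0 := fun θ =>
    hus.eq_deriv _ (hasDerivWithinAt_intervalIntegral_of_continuousOn hs ht
      (fun φ _ x hx => hwt φ x hx) (hwtc.mono (prod_mono_right (subset_univ _)))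
      (fun x hx => (hw x hx).intervalIntegrable _ _))
      (((hvt θ t ht).sub (hvt 0 t ht)).congr (fun x hx => hFTC x hx θ) (hFTC t ht θ))
  have hwt_cont : Continuous (wt t) := continuousOn_univ.1 <|
    hwtc.comp (continuousOn_const.prodMk continuousOn_id) fun φ _ => ⟨ht, mem_univ φ⟩
  refine ((hwt_cont.integral_hasStrictDerivAt 0 θ).hasDerivAt.const_add (vt t 0))
    |>.congr_of_eventuallyEq (Eventually.of_forall fun φ => ?_)
  show vt t φ = vt t 0 + ∫ x in 0..φ, wt t x
  rw [hwt_int]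
  abel

end ParametricIntegral

section Periodic

variable {E : Type*} [NormedAddCommGroup E] [NormedSpace ℝ E] {f f' : ℝ → E} {c : ℝ}

theorem Function.Periodic.periodic_of_hasDerivAt (hf : Periodic f c)
    (hf' : ∀ x, HasDerivAt f (f' x) x) : Periodic f' c := fun x =>
  ((hf' (x + c)).comp_add_const x c).unique (by rw [hf.funext]; exact hf' x)

variable [CompleteSpace E]

theorem Function.Periodic.intervalIntegral_deriv_eq_zero (hf : Periodic f c)
    (hf' : ∀ x, HasDerivAt f (f' x) x) (hint : IntervalIntegrable f' volume 0 c) :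
    ∫ x in 0..c, f' x = 0 := by
  rw [integral_eq_sub_of_hasDerivAt (fun x _ => hf' x) hint, hf.eq, sub_self]

theorem Function.Periodic.eq_zero_of_hasDerivAt_const {e : E} (hf : Periodic f c) (hc : c ≠ 0)
    (hf' : ∀ x, HasDerivAt f e x) : e = 0 := by
  have h := integral_eq_sub_of_hasDerivAt (fun x _ => hf' x)
    (intervalIntegrable_const (a := 0) (b := c))
  rw [intervalIntegral.integral_const, sub_zero, hf.eq, sub_self] at h
  exact (smul_eq_zero.1 h).resolve_left hc

end Periodic

theorem Function.Periodic.intervalIntegral_mul_deriv_deriv {f f' f'' : ℝ → ℝ} {c : ℝ}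
    (hf : Periodic f c) (hf' : ∀ x, HasDerivAt f (f' x) x) (hf'' : ∀ x, HasDerivAt f' (f'' x) x)
    (hint : IntervalIntegrable f'' volume 0 c) :
    ∫ x in 0..c, f x * f'' x = -∫ x in 0..c, f' x ^ 2 := by
  have hf'c : Continuous f' := continuous_iff_continuousAt.2 fun x => (hf'' x).continuousAt
  rw [integral_mul_deriv_eq_deriv_mul (fun x _ => hf' x) (fun x _ => hf'' x)
    (hf'c.intervalIntegrable _ _) hint, hf.eq, (hf.periodic_of_hasDerivAt hf').eq, sub_self,
    zero_sub]
  simp only [sq]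

section MuLambda

variable {lam σ c : ℝ} {f f' f'' f''' g g' : ℝ → ℝ}

theorem hasDerivAt_muLambda_integrated (hf' : ∀ x, HasDerivAt f (f' x) x)
    (hf'' : ∀ x, HasDerivAt f' (f'' x) x) (hf''' : ∀ x, HasDerivAt f'' (f''' x) x)
    (hg' : ∀ x, HasDerivAt g (g' x) x)
    (hpde : ∀ x, (c - g' x) + f x * (-(f''' x)) + lam * f' x * (σ - f'' x) = 0) (x : ℝ) :
    HasDerivAt (fun x => g x + f x * f'' x + (lam - 1) / 2 * f' x ^ 2 - lam * σ * f x) c x := by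
  refine (((hg' x).fun_add ((hf' x).fun_mul (hf''' x))).fun_add
    (((hf'' x).fun_pow 2).const_mul ((lam - 1) / 2))).fun_sub
    ((hf' x).const_mul (lam * σ)) |>.congr_deriv ?_
  linear_combination -hpde x

theorem muLambda_integrated_of_periodic (hf : Periodic f 1) (hf' : ∀ x, HasDerivAt f (f' x) x)
    (hf'' : ∀ x, HasDerivAt f' (f'' x) x) (hf''' : ∀ x, HasDerivAt f'' (f''' x) x)
    (hg : Periodic g 1) (hg' : ∀ x, HasDerivAt g (g' x) x) (hg0 : ∫ x in (0 : ℝ)..1, g x = 0)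
    (hpde : ∀ x, (c - g' x) + f x * (-(f''' x))
      + lam * f' x * ((∫ y in (0 : ℝ)..1, f y) - f'' x) = 0) :
    c = 0 ∧ ∀ x, g x + f x * f'' x + (lam - 1) / 2 * f' x ^ 2 - lam * (∫ y in (0 : ℝ)..1, f y) * f x
      = (lam - 3) / 2 * (∫ y in (0 : ℝ)..1, f' y ^ 2) - lam * (∫ y in (0 : ℝ)..1, f y) ^ 2 := by
  set σ := ∫ y in (0 : ℝ)..1, f y
  set H := fun x => g x + f x * f'' x + (lam - 1) / 2 * f' x ^ 2 - lam * σ * f x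
  have hH := hasDerivAt_muLambda_integrated hf' hf'' hf''' hg' hpde
  have hf'per := hf.periodic_of_hasDerivAt hf'
  have hf''per := hf'per.periodic_of_hasDerivAt hf''
  have hHper : Periodic H 1 := fun x => by simp only [H, hf x, hf'per x, hf''per x, hg x]
  obtain rfl : c = 0 := hHper.eq_zero_of_hasDerivAt_const one_ne_zero hH
  refine ⟨rfl, fun x => ?_⟩
  have hconst : ∀ y, H y = H x := fun y =>
    is_const_of_deriv_eq_zero (fun z => (hH z).differentiableAt) (fun z => (hH z).deriv) y x
  have hfc : Continuous f := continuous_iff_continuousAt.2 fun x => (hf' x).continuousAt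
  have hf'c : Continuous f' := continuous_iff_continuousAt.2 fun x => (hf'' x).continuousAt
  have hf''c : Continuous f'' := continuous_iff_continuousAt.2 fun x => (hf''' x).continuousAt
  have hgc : Continuous g := continuous_iff_continuousAt.2 fun x => (hg' x).continuousAt
  have hmean : ∫ y in (0 : ℝ)..1, H y = H x := by
    rw [integral_congr fun y _ => hconst y]
    simp
  have hsplit : ∫ y in (0 : ℝ)..1, H y = (∫ y in (0 : ℝ)..1, g y) + (∫ y in (0 : ℝ)..1, f y * f'' y)
      + (lam - 1) / 2 * (∫ y in (0 : ℝ)..1, f' y ^ 2) - lam * σ * σ := by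
    simp only [H]
    rw [intervalIntegral.integral_sub, intervalIntegral.integral_add,
      intervalIntegral.integral_add, intervalIntegral.integral_const_mul,
      intervalIntegral.integral_const_mul]
    all_goals exact Continuous.intervalIntegrable (by fun_prop) _ _
  show H x = _
  rw [← hmean, hsplit, hg0,
    hf.intervalIntegral_mul_deriv_deriv hf' hf'' (hf''c.intervalIntegrable _ _)]
  ring

end MuLambda

theorem convex_setOf_nonneg_coe_lt (T : EReal) :
    Convex ℝ {t : ℝ | 0 ≤ t ∧ (t : EReal) < T} :=
  OrdConnected.convex
    ⟨fun _ hx _ hy _ hz => ⟨hx.1.trans hz.1, (EReal.coe_le_coe_iff.2 hz.2).trans_lt hy.2⟩⟩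

theorem uniqueDiffOn_setOf_nonneg_coe_lt {T : EReal} (hT : 0 < T) :
    UniqueDiffOn ℝ {t : ℝ | 0 ≤ t ∧ (t : EReal) < T} := by
  obtain ⟨r, hr0, hrT⟩ := EReal.lt_iff_exists_real_btwn.1 hT
  have hr : 0 < r := EReal.coe_pos.1 hr0
  have hIoo : Ioo 0 r ⊆ {t : ℝ | 0 ≤ t ∧ (t : EReal) < T} := fun x hx =>
    ⟨hx.1.le, (EReal.coe_lt_coe_iff.2 hx.2).trans hrT⟩
  exact uniqueDiffOn_convex (convex_setOf_nonneg_coe_lt T)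
    ⟨r / 2, interior_maximal hIoo isOpen_Ioo ⟨half_pos hr, half_lt_self hr⟩⟩

theorem stmt_3_general (lam : ℝ) (T : EReal) (hT : 0 < T)
    (J : Set ℝ) (hJ : J = {t : ℝ | 0 ≤ t ∧ (t : EReal) < T})
    (u uθ utθ uθθ utθθ uθθθ : ℝ → ℝ → ℝ) (σd : ℝ → ℝ)
    (huper : ∀ t ∈ J, ∀ θ : ℝ, u t (θ + 1) = u t θ)
    -- u is C³ in θ
    (huθ : ∀ t ∈ J, ∀ θ : ℝ, HasDerivAt (u t) (uθ t θ) θ)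
    (huθθ : ∀ t ∈ J, ∀ θ : ℝ, HasDerivAt (uθ t) (uθθ t θ) θ)
    (huθθθ : ∀ t ∈ J, ∀ θ : ℝ, HasDerivAt (uθθ t) (uθθθ t θ) θ)
    -- u is C¹ in t, with continuous mixed partials u_t, u_tθ, u_tθθ
    (hutθ : ∀ θ : ℝ, ∀ t ∈ J, HasDerivWithinAt (fun s => uθ s θ) (utθ t θ) J t)
    (hutθθ : ∀ θ : ℝ, ∀ t ∈ J, HasDerivWithinAt (fun s => uθθ s θ) (utθθ t θ) J t)
    (hutθc : ContinuousOn (fun p : ℝ × ℝ => utθ p.1 p.2) (J ×ˢ univ))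
    (hutθθc : ContinuousOn (fun p : ℝ × ℝ => utθθ p.1 p.2) (J ×ˢ univ))
    -- σ(t) = ∫₀¹ u(t,θ) dθ is differentiable with derivative σd t
    (hσd : ∀ t ∈ J, HasDerivWithinAt (fun s => ∫ φ in (0:ℝ)..1, u s φ) (σd t) J t)
    -- the μ-λ equation m_t + u m_θ + λ u_θ m = 0 with m = σ(t) - u_θθ
    (hPDE : ∀ t ∈ J, ∀ θ : ℝ,
      (σd t - utθθ t θ) + u t θ * (-(uθθθ t θ))
        + lam * uθ t θ * ((∫ φ in (0:ℝ)..1, u t φ) - uθθ t θ) = 0) :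
    (∀ t ∈ J, σd t = 0) ∧
    (∀ t ∈ J, (∫ φ in (0:ℝ)..1, u t φ) = ∫ φ in (0:ℝ)..1, u 0 φ) ∧
    (∀ t ∈ J, ∀ θ : ℝ,
      utθ t θ + u t θ * uθθ t θ + (lam - 1) / 2 * uθ t θ ^ 2
          - lam * (∫ φ in (0:ℝ)..1, u t φ) * u t θ
        = (lam - 3) / 2 * (∫ φ in (0:ℝ)..1, uθ t φ ^ 2)
            - lam * (∫ φ in (0:ℝ)..1, u t φ) ^ 2) := by
  have hper : ∀ s ∈ J, Periodic (u s) 1 := huper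
  have hJc : Convex ℝ J := hJ ▸ convex_setOf_nonneg_coe_lt T
  have hJu : UniqueDiffOn ℝ J := hJ ▸ uniqueDiffOn_setOf_nonneg_coe_lt hT
  have hJ0 : (0 : ℝ) ∈ J := by rw [hJ]; exact ⟨le_rfl, by simpa using hT⟩
  have huθc : ∀ s ∈ J, Continuous (uθ s) := fun s hs =>
    continuous_iff_continuousAt.2 fun θ => (huθθ s hs θ).continuousAt
  have huθθc : ∀ s ∈ J, Continuous (uθθ s) := fun s hs =>
    continuous_iff_continuousAt.2 fun θ => (huθθθ s hs θ).continuousAt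
  have hutθ_per : ∀ t ∈ J, Periodic (utθ t) 1 := fun t ht =>
    periodic_paramDeriv (hJu t ht) ht
      (fun s hs => (hper s hs).periodic_of_hasDerivAt (huθ s hs)) (fun θ => hutθ θ t ht)
  have hutθ_deriv : ∀ t ∈ J, ∀ θ, HasDerivAt (utθ t) (utθθ t θ) θ := fun t ht =>
    hasDerivAt_paramDeriv_of_continuousOn hJc (hJu t ht) ht huθθ huθθc hutθ hutθθ hutθθc
  have hutθ_mean : ∀ t ∈ J, ∫ θ in (0 : ℝ)..1, utθ t θ = 0 := fun t ht =>
    intervalIntegral_paramDeriv_eq_zero hJc (hJu t ht) ht (fun θ _ => hutθ θ)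
      (hutθc.mono (prod_mono_right (subset_univ _)))
      (fun s hs => (huθc s hs).intervalIntegrable _ _)
      (fun s hs => (hper s hs).intervalIntegral_deriv_eq_zero (huθ s hs)
        ((huθc s hs).intervalIntegrable _ _))
  have hslice := fun t (ht : t ∈ J) => muLambda_integrated_of_periodic (hper t ht) (huθ t ht)
    (huθθ t ht) (huθθθ t ht) (hutθ_per t ht) (hutθ_deriv t ht) (hutθ_mean t ht) (hPDE t ht)
  refine ⟨fun t ht => (hslice t ht).1, fun t ht => ?_, fun t ht => (hslice t ht).2⟩
  have hσ := hJc.norm_image_sub_le_of_norm_hasDerivWithin_le hσd (C := 0)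
    (fun s hs => by simp [(hslice s hs).1]) hJ0 ht
  simpa [sub_eq_zero] using hσ

/-- for solutions of the μ-λ equation with m = σ(t) - u_θθ, the mean
σ(t) = ∫₀¹ u is constant, and the equation can be integrated once in θ to give
u_tθ + u u_θθ + ((λ-1)/2) u_θ² - λσu = I(t) with I(t) = ((λ-3)/2) E(t) - λσ². -/
theorem stmt_3 (lam : ℝ) (T : EReal) (hT : 0 < T)
    (J : Set ℝ) (hJ : J = {t : ℝ | 0 ≤ t ∧ (t : EReal) < T})
    (u ut uθ utθ uθθ utθθ uθθθ : ℝ → ℝ → ℝ) (σd : ℝ → ℝ)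
    (huper : ∀ t ∈ J, ∀ θ : ℝ, u t (θ + 1) = u t θ)
    -- u is C³ in θ
    (huθ : ∀ t ∈ J, ∀ θ : ℝ, HasDerivAt (u t) (uθ t θ) θ)
    (huθθ : ∀ t ∈ J, ∀ θ : ℝ, HasDerivAt (uθ t) (uθθ t θ) θ)
    (huθθθ : ∀ t ∈ J, ∀ θ : ℝ, HasDerivAt (uθθ t) (uθθθ t θ) θ)
    (huθθθc : ∀ t ∈ J, Continuous (uθθθ t))
    -- u is C¹ in t, with continuous mixed partials u_t, u_tθ, u_tθθ
    (hut : ∀ θ : ℝ, ∀ t ∈ J, HasDerivWithinAt (fun s => u s θ) (ut t θ) J t)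
    (hutθ : ∀ θ : ℝ, ∀ t ∈ J, HasDerivWithinAt (fun s => uθ s θ) (utθ t θ) J t)
    (hutθθ : ∀ θ : ℝ, ∀ t ∈ J, HasDerivWithinAt (fun s => uθθ s θ) (utθθ t θ) J t)
    (hutc : ContinuousOn (fun p : ℝ × ℝ => ut p.1 p.2) (J ×ˢ univ))
    (hutθc : ContinuousOn (fun p : ℝ × ℝ => utθ p.1 p.2) (J ×ˢ univ))
    (hutθθc : ContinuousOn (fun p : ℝ × ℝ => utθθ p.1 p.2) (J ×ˢ univ))
    -- σ(t) = ∫₀¹ u(t,θ) dθ is differentiable with derivative σd t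
    (hσd : ∀ t ∈ J, HasDerivWithinAt (fun s => ∫ φ in (0:ℝ)..1, u s φ) (σd t) J t)
    -- the μ-λ equation m_t + u m_θ + λ u_θ m = 0 with m = σ(t) - u_θθ
    (hPDE : ∀ t ∈ J, ∀ θ : ℝ,
      (σd t - utθθ t θ) + u t θ * (-(uθθθ t θ))
        + lam * uθ t θ * ((∫ φ in (0:ℝ)..1, u t φ) - uθθ t θ) = 0) :
    (∀ t ∈ J, σd t = 0) ∧
    (∀ t ∈ J, (∫ φ in (0:ℝ)..1, u t φ) = ∫ φ in (0:ℝ)..1, u 0 φ) ∧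
    (∀ t ∈ J, ∀ θ : ℝ,
      utθ t θ + u t θ * uθθ t θ + (lam - 1) / 2 * uθ t θ ^ 2
          - lam * (∫ φ in (0:ℝ)..1, u t φ) * u t θ
        = (lam - 3) / 2 * (∫ φ in (0:ℝ)..1, uθ t φ ^ 2)
            - lam * (∫ φ in (0:ℝ)..1, u t φ) ^ 2) :=
  stmt_3_general lam T hT J hJ u uθ utθ uθθ utθθ uθθθ σd huper huθ huθθ huθθθ hutθ hutθθ hutθc
    hutθθc hσd hPDE
end

section
/- Let T ∈ (0,∞], let F : [0,T) → ℝ be continuous, and let φ : [0,T) → ℝ be C² with φ(t) > 0 for all t and φ''(t) = F(t) φ(t) on [0,T). Suppose f : [0,T) → ℝ is nonnegative, differentiable, and nondecreasing with F(t) ≤ f(t)² for all t ∈ [0,T). Then there exists a constant C such that φ'(t)/φ(t) ≤ C + f(t) for all t ∈ [0,T); indeed φ'(t)/φ(t) ≤ max{φ'(0)/φ(0), f(t)} for all t ∈ [0,T). -/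
/-!
Fix `t` and put `M = max (φ'(0)/φ(0)) (f t)`. Since `f` is nonnegative and nondecreasing,
`F ≤ f² ≤ M²` on `[0, t]`. The weighted function `u = e^{Mt} (φ' - Mφ)` has derivative
`e^{Mt} (F - M²) φ ≤ 0`, so `u(t) ≤ u(0) ≤ 0`, that is `φ'(t) ≤ M φ(t)`.
-/

open Set Real

section RiccatiComparison

variable {φ φ' F : ℝ → ℝ} {M : ℝ}

theorem hasDerivWithinAt_exp_mul_mul_sub {s : Set ℝ} {t : ℝ}
    (hφ : HasDerivWithinAt φ (φ' t) s t) (hφ' : HasDerivWithinAt φ' (F t * φ t) s t) :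
    HasDerivWithinAt (fun x => exp (M * x) * (φ' x - M * φ x))
      (exp (M * t) * ((F t - M ^ 2) * φ t)) s t := by
  have hexp : HasDerivWithinAt (fun x => exp (M * x)) (exp (M * t) * M) s t := by
    simpa using ((hasDerivAt_id t).const_mul M).exp.hasDerivWithinAt
  have h : HasDerivWithinAt (fun x => exp (M * x) * (φ' x - M * φ x)) _ s t :=
    hexp.mul (hφ'.sub (hφ.const_mul M))
  convert h using 1
  ring

theorem antitoneOn_exp_mul_mul_sub {a b : ℝ}
    (hφ_nonneg : ∀ t ∈ Icc a b, 0 ≤ φ t)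
    (hφ : ∀ t ∈ Icc a b, HasDerivWithinAt φ (φ' t) (Icc a b) t)
    (hφ' : ∀ t ∈ Icc a b, HasDerivWithinAt φ' (F t * φ t) (Icc a b) t)
    (hFM : ∀ t ∈ Icc a b, F t ≤ M ^ 2) :
    AntitoneOn (fun x => exp (M * x) * (φ' x - M * φ x)) (Icc a b) := by
  have hderiv : ∀ t ∈ Icc a b, HasDerivWithinAt (fun x => exp (M * x) * (φ' x - M * φ x))
      (exp (M * t) * ((F t - M ^ 2) * φ t)) (Icc a b) t :=
    fun t ht => hasDerivWithinAt_exp_mul_mul_sub (hφ t ht) (hφ' t ht)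
  refine antitoneOn_of_hasDerivWithinAt_nonpos (convex_Icc a b)
    (f' := fun t => exp (M * t) * ((F t - M ^ 2) * φ t)) (fun t ht => (hderiv t ht).continuousWithinAt) (fun t ht => ?_) (fun t ht => ?_)
  · exact (hderiv t (interior_subset ht)).mono interior_subset
  · have ht' := interior_subset ht
    exact mul_nonpos_of_nonneg_of_nonpos (exp_pos _).le
      (mul_nonpos_of_nonpos_of_nonneg (sub_nonpos.2 (hFM t ht')) (hφ_nonneg t ht'))

/-- Riccati comparison: `R = φ'/φ` cannot cross `M` upwards while `F ≤ M²`. -/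
theorem deriv_le_mul_of_le_sq {a b : ℝ} (hab : a ≤ b)
    (hφ_nonneg : ∀ t ∈ Icc a b, 0 ≤ φ t)
    (hφ : ∀ t ∈ Icc a b, HasDerivWithinAt φ (φ' t) (Icc a b) t)
    (hφ' : ∀ t ∈ Icc a b, HasDerivWithinAt φ' (F t * φ t) (Icc a b) t)
    (hFM : ∀ t ∈ Icc a b, F t ≤ M ^ 2) (ha : φ' a ≤ M * φ a) :
    φ' b ≤ M * φ b := by
  have hu : exp (M * b) * (φ' b - M * φ b) ≤ exp (M * a) * (φ' a - M * φ a) :=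
    antitoneOn_exp_mul_mul_sub hφ_nonneg hφ hφ' hFM (left_mem_Icc.2 hab)
      (right_mem_Icc.2 hab) hab
  have hua : exp (M * a) * (φ' a - M * φ a) ≤ 0 :=
    mul_nonpos_of_nonneg_of_nonpos (exp_pos _).le (sub_nonpos.2 ha)
  have := nonpos_of_mul_nonpos_right (hu.trans hua) (exp_pos (M * b))
  linarith

end RiccatiComparison

theorem stmt_7_general (T : EReal)
    (J : Set ℝ) (hJ : J = {t : ℝ | 0 ≤ t ∧ (t : EReal) < T})
    (F φ φ' f : ℝ → ℝ)
    (hφpos : ∀ t ∈ J, 0 < φ t)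
    (hφ : ∀ t ∈ J, HasDerivWithinAt φ (φ' t) J t)
    (hφ' : ∀ t ∈ J, HasDerivWithinAt φ' (F t * φ t) J t)
    (hf0 : ∀ t ∈ J, 0 ≤ f t)
    (hfmono : MonotoneOn f J)
    (hFf : ∀ t ∈ J, F t ≤ f t ^ 2) :
    (∃ C : ℝ, ∀ t ∈ J, φ' t / φ t ≤ C + f t) ∧
    (∀ t ∈ J, φ' t / φ t ≤ max (φ' 0 / φ 0) (f t)) := by
  have key : ∀ t ∈ J, φ' t / φ t ≤ max (φ' 0 / φ 0) (f t) := by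
    intro t ht
    have hIcc : Icc 0 t ⊆ J := fun s hs => by
      subst hJ
      exact ⟨hs.1, lt_of_le_of_lt (EReal.coe_le_coe_iff.2 hs.2) ht.2⟩
    have h0 : (0 : ℝ) ∈ J := hIcc (left_mem_Icc.2 (hJ ▸ ht).1)
    set M := max (φ' 0 / φ 0) (f t)
    have hFM : ∀ s ∈ Icc 0 t, F s ≤ M ^ 2 := fun s hs =>
      (hFf s (hIcc hs)).trans <| pow_le_pow_left₀ (hf0 s (hIcc hs))
        ((hfmono (hIcc hs) ht hs.2).trans (le_max_right _ _)) 2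
    rw [div_le_iff₀ (hφpos t ht)]
    exact deriv_le_mul_of_le_sq (hJ ▸ ht).1 (fun s hs => (hφpos s (hIcc hs)).le)
      (fun s hs => (hφ s (hIcc hs)).mono hIcc) (fun s hs => (hφ' s (hIcc hs)).mono hIcc) hFM
      ((div_le_iff₀ (hφpos 0 h0)).1 (le_max_left _ _))
  refine ⟨⟨max (φ' 0 / φ 0) 0, fun t ht => (key t ht).trans (max_le ?_ ?_)⟩, key⟩
  · exact le_add_of_le_of_nonneg (le_max_left _ _) (hf0 t ht)
  · exact le_add_of_nonneg_left (le_max_right _ _)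

/-- Riccati comparison bound for the logarithmic derivative of a positive
solution of φ'' = Fφ when F ≤ f². -/
theorem stmt_7 (T : EReal) (hT : 0 < T)
    (J : Set ℝ) (hJ : J = {t : ℝ | 0 ≤ t ∧ (t : EReal) < T})
    (F φ φ' f : ℝ → ℝ)
    (hF : ContinuousOn F J)
    (hφpos : ∀ t ∈ J, 0 < φ t)
    (hφ : ∀ t ∈ J, HasDerivWithinAt φ (φ' t) J t)
    (hφ' : ∀ t ∈ J, HasDerivWithinAt φ' (F t * φ t) J t)
    (hf0 : ∀ t ∈ J, 0 ≤ f t)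
    (hfdiff : ∀ t ∈ J, DifferentiableWithinAt ℝ f J t)
    (hfmono : MonotoneOn f J)
    (hFf : ∀ t ∈ J, F t ≤ f t ^ 2) :
    (∃ C : ℝ, ∀ t ∈ J, φ' t / φ t ≤ C + f t) ∧
    (∀ t ∈ J, φ' t / φ t ≤ max (φ' 0 / φ 0) (f t)) :=
  stmt_7_general T J hJ F φ φ' f hφpos hφ hφ' hf0 hfmono hFf
end

section
/- Let T ∈ (0,∞], let F : [0,T) → ℝ be continuous, and let t₀ ∈ [0,T). Then there exists c < 0 with the following property: every C² function φ : [0,T) → ℝ satisfying φ''(t) = F(t) φ(t) on [0,T), φ(t₀) > 0, and φ'(t₀)/φ(t₀) < c vanishes somewhere after t₀, i.e., φ(t*) = 0 for some t* ∈ (t₀, T). -/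
/-!
On a compact interval `[t₀, t₀ + δ] ⊆ J` we have `F ≤ M`. If `φ` stayed nonnegative there, with
maximum `m`, then `φ'' = F φ ≤ M m`, so the second-order Taylor bound gives
`φ t ≤ φ t₀ + φ' t₀ (t - t₀) + M m δ² / 2`. Choosing `M δ² ≤ 1` and using `φ' t₀ < 0`, evaluating at
the maximum point gives `m ≤ 2 φ t₀`, and then evaluating at `t₀ + δ` gives
`φ (t₀ + δ) ≤ 2 φ t₀ + φ' t₀ δ`, which is negative as soon as `φ' t₀ / φ t₀ < -2 / δ`.
The intermediate value theorem then provides the zero.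
-/

open Set

theorem sub_le_sub_of_hasDerivWithinAt_le {f g f' g' : ℝ → ℝ} {a b : ℝ}
    (hf : ∀ t ∈ Icc a b, HasDerivWithinAt f (f' t) (Icc a b) t)
    (hg : ∀ t ∈ Icc a b, HasDerivWithinAt g (g' t) (Icc a b) t)
    (hle : ∀ t ∈ Icc a b, f' t ≤ g' t) {t : ℝ} (ht : t ∈ Icc a b) :
    f t - f a ≤ g t - g a := by
  have hmono : MonotoneOn (fun s => g s - f s) (Icc a b) := by
    refine monotoneOn_of_hasDerivWithinAt_nonneg (convex_Icc a b)
      (fun s hs => ((hg s hs).sub (hf s hs)).continuousWithinAt) (fun s hs => ?_)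
      (fun s hs => sub_nonneg.2 (hle s (interior_subset hs)))
    exact ((hg s (interior_subset hs)).sub (hf s (interior_subset hs))).mono interior_subset
  linarith [hmono (left_mem_Icc.2 (ht.1.trans ht.2)) ht ht.1]

theorem le_add_mul_add_sq_of_hasDerivWithinAt_le {φ φ' φ'' : ℝ → ℝ} {a b K : ℝ}
    (hφ : ∀ t ∈ Icc a b, HasDerivWithinAt φ (φ' t) (Icc a b) t)
    (hφ' : ∀ t ∈ Icc a b, HasDerivWithinAt φ' (φ'' t) (Icc a b) t)
    (hK : ∀ t ∈ Icc a b, φ'' t ≤ K) {t : ℝ} (ht : t ∈ Icc a b) :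
    φ t ≤ φ a + φ' a * (t - a) + K / 2 * (t - a) ^ 2 := by
  have hslope : ∀ s ∈ Icc a b, φ' s ≤ φ' a + K * (s - a) := fun s hs => by
    have hlin : ∀ s ∈ Icc a b, HasDerivWithinAt (fun s => K * (s - a)) K (Icc a b) s :=
      fun s _ => by simpa using ((hasDerivWithinAt_id s _).sub_const a).const_mul K
    linarith [sub_le_sub_of_hasDerivWithinAt_le hφ' hlin hK hs]
  have hquad : ∀ s ∈ Icc a b, HasDerivWithinAt (fun s => φ' a * (s - a) + K / 2 * (s - a) ^ 2)
      (φ' a + K * (s - a)) (Icc a b) s := fun s _ => by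
    have h₁ : HasDerivAt (fun s => s - a) 1 s := (hasDerivAt_id' s).sub_const a
    refine (((h₁.const_mul (φ' a)).add ((h₁.pow 2).const_mul (K / 2))).hasDerivWithinAt
      ).congr_deriv ?_
    simp only [Nat.cast_ofNat]; ring
  linarith [sub_le_sub_of_hasDerivWithinAt_le hφ hquad hslope ht]


theorem exists_mem_Ioc_neg_of_hasDerivWithinAt_mul {φ φ' F : ℝ → ℝ} {a δ M : ℝ}
    (hφ : ∀ t ∈ Icc a (a + δ), HasDerivWithinAt φ (φ' t) (Icc a (a + δ)) t)
    (hφ' : ∀ t ∈ Icc a (a + δ), HasDerivWithinAt φ' (F t * φ t) (Icc a (a + δ)) t)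
    (hδ : 0 ≤ δ) (hFM : ∀ t ∈ Icc a (a + δ), F t ≤ M) (hM : 0 ≤ M) (hMδ : M * δ ^ 2 ≤ 1)
    (hφa : 0 < φ a) (hslope : φ' a * δ < -2 * φ a) :
    ∃ t ∈ Ioc a (a + δ), φ t < 0 := by
  by_contra! hnonneg
  have hφ_nonneg : ∀ t ∈ Icc a (a + δ), 0 ≤ φ t := fun t ht =>
    (eq_or_lt_of_le ht.1).elim (fun h => h ▸ hφa.le) (fun h => hnonneg t ⟨h, ht.2⟩)
  obtain ⟨t₁, ht₁, hmax⟩ := isCompact_Icc.exists_isMaxOn (nonempty_Icc.2 (by linarith))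
    (fun t ht => (hφ t ht).continuousWithinAt)
  set m := φ t₁
  have hm : 0 ≤ m := hφ_nonneg t₁ ht₁
  have hMm : M * m * δ ^ 2 ≤ m := by nlinarith
  have hFφ : ∀ t ∈ Icc a (a + δ), F t * φ t ≤ M * m := fun t ht =>
    (mul_le_mul_of_nonneg_right (hFM t ht) (hφ_nonneg t ht)).trans
      (mul_le_mul_of_nonneg_left (hmax ht) hM)
  have htaylor := fun t (ht : t ∈ Icc a (a + δ)) =>
    le_add_mul_add_sq_of_hasDerivWithinAt_le hφ hφ' hFφ ht
  have hP : φ' a < 0 := by nlinarith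
  have hm_le : m ≤ 2 * φ a := by
    have h₁ := htaylor t₁ ht₁
    have h₂ : φ' a * (t₁ - a) ≤ 0 := mul_nonpos_of_nonpos_of_nonneg hP.le (by linarith [ht₁.1])
    have h₃ : M * m * (t₁ - a) ^ 2 ≤ M * m * δ ^ 2 :=
      mul_le_mul_of_nonneg_left (pow_le_pow_left₀ (by linarith [ht₁.1]) (by linarith [ht₁.2]) 2)
        (mul_nonneg hM hm)
    linarith
  have hend := htaylor (a + δ) (right_mem_Icc.2 (by linarith))
  rw [add_sub_cancel_left] at hend
  linarith [hφ_nonneg (a + δ) (right_mem_Icc.2 (by linarith))]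

theorem exists_Icc_subset_of_coe_lt {T : EReal} {t₀ : ℝ} (h₀ : 0 ≤ t₀) (hT : (t₀ : EReal) < T) :
    ∃ d, t₀ < d ∧ Icc t₀ d ⊆ {t : ℝ | 0 ≤ t ∧ (t : EReal) < T} := by
  obtain ⟨d, htd, hdT⟩ := EReal.lt_iff_exists_real_btwn.1 hT
  exact ⟨d, EReal.coe_lt_coe_iff.1 htd,
    fun t ht => ⟨h₀.trans ht.1, (EReal.coe_le_coe_iff.2 ht.2).trans_lt hdT⟩⟩

theorem exists_pos_le_mul_sq_le_one {M ε : ℝ} (hM : 0 ≤ M) (hε : 0 < ε) :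
    ∃ δ, 0 < δ ∧ δ ≤ ε ∧ M * δ ^ 2 ≤ 1 := by
  set δ := min ε (1 / (M + 1))
  have hδ : 0 < δ := by positivity
  have hδM : δ * (M + 1) ≤ 1 := (le_div_iff₀ (by linarith)).1 (min_le_right ε (1 / (M + 1)))
  exact ⟨δ, hδ, min_le_left _ _, by nlinarith⟩

theorem stmt_8_general (T : EReal)
    (J : Set ℝ) (hJ : J = {t : ℝ | 0 ≤ t ∧ (t : EReal) < T})
    (F : ℝ → ℝ) (hF : ContinuousOn F J)
    (t₀ : ℝ) (ht₀ : t₀ ∈ J) :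
    ∃ c : ℝ, c < 0 ∧ ∀ φ φ' : ℝ → ℝ,
      (∀ t ∈ J, HasDerivWithinAt φ (φ' t) J t) →
      (∀ t ∈ J, HasDerivWithinAt φ' (F t * φ t) J t) →
      0 < φ t₀ → φ' t₀ / φ t₀ < c →
      ∃ ts ∈ J, t₀ < ts ∧ φ ts = 0 := by
  subst hJ
  obtain ⟨d, ht₀d, hdJ⟩ := exists_Icc_subset_of_coe_lt ht₀.1 ht₀.2
  obtain ⟨M, hM⟩ := isCompact_Icc.exists_bound_of_continuousOn (hF.mono hdJ)
  have hM₀ : 0 ≤ M := (norm_nonneg _).trans (hM t₀ (left_mem_Icc.2 ht₀d.le))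
  obtain ⟨δ, hδ, hδε, hMδ⟩ := exists_pos_le_mul_sq_le_one hM₀ (sub_pos.2 ht₀d)
  have hδd : Icc t₀ (t₀ + δ) ⊆ Icc t₀ d := Icc_subset_Icc_right (by linarith)
  have hsub : Icc t₀ (t₀ + δ) ⊆ {t : ℝ | 0 ≤ t ∧ (t : EReal) < T} := hδd.trans hdJ
  refine ⟨-2 / δ, div_neg_of_neg_of_pos (by norm_num) hδ, fun φ φ' hφ hφ' hpos hc => ?_⟩
  have hslope : φ' t₀ * δ < -2 * φ t₀ := by
    rw [div_lt_iff₀ hpos, div_mul_eq_mul_div, lt_div_iff₀ hδ] at hc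
    linarith
  obtain ⟨t, ht, hneg⟩ := exists_mem_Ioc_neg_of_hasDerivWithinAt_mul
    (fun t ht => (hφ t (hsub ht)).mono hsub) (fun t ht => (hφ' t (hsub ht)).mono hsub)
    hδ.le (fun t ht => (le_abs_self _).trans (hM t (hδd ht))) hM₀ hMδ hpos hslope
  have htδ : Icc t₀ t ⊆ Icc t₀ (t₀ + δ) := Icc_subset_Icc_right ht.2
  obtain ⟨ts, hts, hzero⟩ := intermediate_value_Ioo' ht.1.le
    (fun s hs => ((hφ s (hsub (htδ hs))).continuousWithinAt.mono (htδ.trans hsub))) ⟨hneg, hpos⟩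
  exact ⟨ts, hsub (htδ (Ioo_subset_Icc_self hts)), hts.1, hzero⟩

/-- a sufficiently negative initial logarithmic derivative forces a
solution of φ'' = Fφ to vanish in finite time. -/
theorem stmt_8 (T : EReal) (hT : 0 < T)
    (J : Set ℝ) (hJ : J = {t : ℝ | 0 ≤ t ∧ (t : EReal) < T})
    (F : ℝ → ℝ) (hF : ContinuousOn F J)
    (t₀ : ℝ) (ht₀ : t₀ ∈ J) :
    ∃ c : ℝ, c < 0 ∧ ∀ φ φ' : ℝ → ℝ,
      (∀ t ∈ J, HasDerivWithinAt φ (φ' t) J t) →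
      (∀ t ∈ J, HasDerivWithinAt φ' (F t * φ t) J t) →
      0 < φ t₀ → φ' t₀ / φ t₀ < c →
      ∃ ts ∈ J, t₀ < ts ∧ φ ts = 0 :=
  stmt_8_general T J hJ F hF t₀ ht₀
end

section
/- Assume hypothesis (H), and let a < d in [0,1] with m₀(θ) ≤ 0 for all θ ∈ [a,d]. Then for each t ∈ [0,T) the function θ ↦ x(t,θ) is nondecreasing on [a,d], and it is strictly increasing on [a,d] for every t ∈ (0,T). As a consequence, for every c ∈ [a,d) and every t ∈ [0,T), x(t,c) ≤ (d−c)^{−1/γ}. -/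
open Set

/-- under hypothesis (H), if m₀ ≤ 0 on [a,d] then θ ↦ x(t,θ) is
nondecreasing on [a,d] (strictly increasing for t > 0), and
x(t,c) ≤ (d-c)^{-1/γ} for c ∈ [a,d). -/
theorem stmt_11
    -- hypothesis (H)
    (γ σ : ℝ) (hγ : 0 < γ) (hσ : 0 < σ)
    (T : EReal) (hT : 0 < T)
    (J : Set ℝ) (hJ : J = {t : ℝ | 0 ≤ t ∧ (t : EReal) < T})
    (m₀ : ℝ → ℝ) (hm₀cont : Continuous m₀) (hm₀per : ∀ θ : ℝ, m₀ (θ + 1) = m₀ θ)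
    (x y xθ : ℝ → ℝ → ℝ)
    (hxcont : ContinuousOn (fun p : ℝ × ℝ => x p.1 p.2) (J ×ˢ univ))
    (hycont : ContinuousOn (fun p : ℝ × ℝ => y p.1 p.2) (J ×ˢ univ))
    (hxper : ∀ t ∈ J, ∀ θ : ℝ, x t (θ + 1) = x t θ)
    (hyper : ∀ t ∈ J, ∀ θ : ℝ, y t (θ + 1) = y t θ)
    (hxθ : ∀ t ∈ J, ∀ θ : ℝ, HasDerivAt (x t) (xθ t θ) θ)
    (hyC1 : ∀ t ∈ J, ∀ θ : ℝ, DifferentiableAt ℝ (y t) θ)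
    (hxpos : ∀ t ∈ J, ∀ θ : ℝ, 0 < x t θ)
    (hy0 : ∀ θ : ℝ, y 0 θ = 0)
    (hyform : ∀ t ∈ J, ∀ θ : ℝ,
      y t θ = -γ * xθ t θ + σ * x t θ * ∫ τ in (0:ℝ)..t, x τ θ ^ γ)
    (hratio : ∀ θ : ℝ, ∀ t ∈ J,
      HasDerivWithinAt (fun s => y s θ / x s θ) (m₀ θ / x t θ ^ 2) J t)
    (hxint : ∀ t ∈ J, (∫ θ in (0:ℝ)..1, x t θ ^ γ) = 1)
    -- the interval [a,d] ⊆ [0,1] on which m₀ ≤ 0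
    (a d : ℝ) (ha : 0 ≤ a) (had : a < d) (hd : d ≤ 1)
    (hm : ∀ θ ∈ Icc a d, m₀ θ ≤ 0) :
    (∀ t ∈ J, MonotoneOn (x t) (Icc a d)) ∧
    (∀ t ∈ J, 0 < t → StrictMonoOn (x t) (Icc a d)) ∧
    (∀ t ∈ J, ∀ c ∈ Ico a d, x t c ≤ (d - c) ^ (-(1 / γ))) := by
  have h0J : (0:ℝ) ∈ J := by rw [hJ]; exact ⟨le_refl 0, by simpa using hT⟩
  have hJsub : ∀ t ∈ J, ∀ s, 0 ≤ s → s ≤ t → s ∈ J := by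
    rw [hJ]
    rintro t ⟨ht0, htT⟩ s hs0 hst
    exact ⟨hs0, lt_of_le_of_lt (EReal.coe_le_coe_iff.mpr hst) htT⟩
  have hJconv : Convex ℝ J := by
    rw [convex_iff_ordConnected, hJ]
    constructor
    rintro u ⟨hu0, huT⟩ v ⟨hv0, hvT⟩ w ⟨huw, hwv⟩
    exact ⟨hu0.trans huw, lt_of_le_of_lt (EReal.coe_le_coe_iff.mpr hwv) hvT⟩
  have hxτcont : ∀ θ : ℝ, ContinuousOn (fun τ => x τ θ) J := by
    intro θ
    exact hxcont.comp (Continuous.continuousOn (by fun_prop : Continuous (fun τ : ℝ => (τ, θ))))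
      (fun τ hτ => ⟨hτ, mem_univ _⟩)
  have hInonneg : ∀ t ∈ J, ∀ θ : ℝ, 0 ≤ ∫ τ in (0:ℝ)..t, x τ θ ^ γ := by
    intro t ht θ
    have ht0 : (0:ℝ) ≤ t := by rw [hJ] at ht; exact ht.1
    apply intervalIntegral.integral_nonneg ht0
    intro u hu
    exact Real.rpow_nonneg (hxpos u (hJsub t ht u hu.1 hu.2) θ).le γ
  have hIpos : ∀ t ∈ J, 0 < t → ∀ θ : ℝ, 0 < ∫ τ in (0:ℝ)..t, x τ θ ^ γ := by
    intro t ht ht0 θ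
    have hint : IntervalIntegrable (fun τ => x τ θ ^ γ) MeasureTheory.volume 0 t := by
      apply ContinuousOn.intervalIntegrable
      rw [uIcc_of_le ht0.le]
      apply ((hxτcont θ).mono (fun u hu => hJsub t ht u hu.1 hu.2)).rpow_const
      intro u hu
      exact Or.inl (hxpos u (hJsub t ht u hu.1 hu.2) θ).ne'
    apply intervalIntegral.intervalIntegral_pos_of_pos_on hint _ ht0
    intro u hu
    exact Real.rpow_pos_of_pos (hxpos u (hJsub t ht u hu.1.le hu.2.le) θ) γ
  have hynonpos : ∀ θ ∈ Icc a d, ∀ t ∈ J, y t θ ≤ 0 := by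
    intro θ hθ t ht
    have hanti : AntitoneOn (fun s => y s θ / x s θ) J := by
      apply antitoneOn_of_hasDerivWithinAt_nonpos hJconv
        (f' := fun s => m₀ θ / x s θ ^ 2)
      · intro s hs
        exact (hratio θ s hs).continuousWithinAt
      · intro s hs
        exact (hratio θ s (interior_subset hs)).mono interior_subset
      · intro s hs
        have hs' := interior_subset hs
        exact div_nonpos_of_nonpos_of_nonneg (hm θ hθ) (pow_pos (hxpos s hs' θ) 2).le
    have ht0 : (0:ℝ) ≤ t := by rw [hJ] at ht; exact ht.1
    have h := hanti h0J ht ht0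
    simp only [hy0 θ, zero_div] at h
    have hx := hxpos t ht θ
    have h2 := mul_le_mul_of_nonneg_right h hx.le
    rwa [div_mul_cancel₀ _ hx.ne', zero_mul] at h2
  have hkey : ∀ t ∈ J, ∀ θ : ℝ,
      γ * xθ t θ = σ * x t θ * (∫ τ in (0:ℝ)..t, x τ θ ^ γ) - y t θ := by
    intro t ht θ
    have := hyform t ht θ
    linarith
  have hxθnonneg : ∀ t ∈ J, ∀ θ ∈ Icc a d, 0 ≤ xθ t θ := by
    intro t ht θ hθ
    have h1 : 0 ≤ γ * xθ t θ := by
      rw [hkey t ht θ]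
      have hy := hynonpos θ hθ t ht
      have h2 : 0 ≤ σ * x t θ * ∫ τ in (0:ℝ)..t, x τ θ ^ γ :=
        mul_nonneg (mul_nonneg hσ.le (hxpos t ht θ).le) (hInonneg t ht θ)
      linarith
    nlinarith
  have hxθpos : ∀ t ∈ J, 0 < t → ∀ θ ∈ Icc a d, 0 < xθ t θ := by
    intro t ht ht0 θ hθ
    have h1 : 0 < γ * xθ t θ := by
      rw [hkey t ht θ]
      have hy := hynonpos θ hθ t ht
      have h2 : 0 < σ * x t θ * ∫ τ in (0:ℝ)..t, x τ θ ^ γ :=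
        mul_pos (mul_pos hσ (hxpos t ht θ)) (hIpos t ht ht0 θ)
      linarith
    nlinarith
  have hxcontθ : ∀ t ∈ J, Continuous (x t) := by
    intro t ht
    exact Differentiable.continuous (fun θ => (hxθ t ht θ).differentiableAt)
  have hmono : ∀ t ∈ J, MonotoneOn (x t) (Icc a d) := by
    intro t ht
    apply monotoneOn_of_hasDerivWithinAt_nonneg (convex_Icc a d)
      ((hxcontθ t ht).continuousOn) (f' := xθ t)
      (fun θ _ => (hxθ t ht θ).hasDerivWithinAt)
    intro θ hθ
    rw [interior_Icc] at hθ
    exact hxθnonneg t ht θ (Ioo_subset_Icc_self hθ)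
  have hstrict : ∀ t ∈ J, 0 < t → StrictMonoOn (x t) (Icc a d) := by
    intro t ht ht0
    apply strictMonoOn_of_hasDerivWithinAt_pos (convex_Icc a d)
      ((hxcontθ t ht).continuousOn) (f' := xθ t)
      (fun θ _ => (hxθ t ht θ).hasDerivWithinAt)
    intro θ hθ
    rw [interior_Icc] at hθ
    exact hxθpos t ht ht0 θ (Ioo_subset_Icc_self hθ)
  refine ⟨hmono, hstrict, ?_⟩
  intro t ht c hc
  have hcd : c < d := hc.2
  have hcIcc : c ∈ Icc a d := ⟨hc.1, hcd.le⟩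
  set g : ℝ → ℝ := fun θ => x t θ ^ γ with hg
  have hgcont : Continuous g :=
    (hxcontθ t ht).rpow_const (fun θ => Or.inl (hxpos t ht θ).ne')
  have hgnonneg : ∀ θ : ℝ, 0 ≤ g θ := fun θ => Real.rpow_nonneg (hxpos t ht θ).le γ
  have hgint : ∀ u v : ℝ, IntervalIntegrable g MeasureTheory.volume u v :=
    fun u v => hgcont.intervalIntegrable u v
  have h1 : (d - c) * g c ≤ ∫ θ in c..d, g θ := by
    have hconst : (∫ _ in c..d, g c) = (d - c) * g c := by
      rw [intervalIntegral.integral_const, smul_eq_mul]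
    rw [← hconst]
    apply intervalIntegral.integral_mono_on hcd.le (intervalIntegrable_const) (hgint c d)
    intro u hu
    have huIcc : u ∈ Icc a d := ⟨hc.1.trans hu.1, hu.2⟩
    exact Real.rpow_le_rpow (hxpos t ht c).le (hmono t ht hcIcc huIcc hu.1) hγ.le
  have h2 : (∫ θ in c..d, g θ) ≤ 1 := by
    have e1 : (∫ θ in (0:ℝ)..c, g θ) + ((∫ θ in c..d, g θ) + (∫ θ in d..1, g θ)) = 1 := by
      rw [intervalIntegral.integral_add_adjacent_intervals (hgint c d) (hgint d 1),
          intervalIntegral.integral_add_adjacent_intervals (hgint 0 c) (hgint c 1)]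
      exact hxint t ht
    have n1 : 0 ≤ ∫ θ in (0:ℝ)..c, g θ :=
      intervalIntegral.integral_nonneg (ha.trans hc.1) (fun u _ => hgnonneg u)
    have n2 : 0 ≤ ∫ θ in d..1, g θ :=
      intervalIntegral.integral_nonneg hd (fun u _ => hgnonneg u)
    linarith
  have hdc : 0 < d - c := sub_pos.mpr hcd
  have h3 : g c ≤ (d - c)⁻¹ := by
    rw [← one_div]
    rw [le_div_iff₀ hdc]
    nlinarith
  have hx0 : 0 ≤ x t c := (hxpos t ht c).le
  have hxeq : x t c = (g c) ^ (1/γ) := by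
    rw [hg]
    show x t c = (x t c ^ γ) ^ (1/γ)
    rw [← Real.rpow_mul hx0, mul_one_div_cancel hγ.ne', Real.rpow_one]
  rw [hxeq]
  have hrw : (d - c) ^ (-(1/γ)) = ((d - c)⁻¹) ^ (1/γ) := by
    rw [Real.rpow_neg hdc.le, ← Real.inv_rpow hdc.le]
  rw [hrw]
  exact Real.rpow_le_rpow (hgnonneg c) h3 (by positivity)
end

section
/- Assume hypothesis (H), and let a ≤ b < c ≤ d in [0,1] with m₀(θ) ≤ 0 for all θ ∈ [a,d]. Then for every t ∈ [0,T), x(t,b) ≤ x(t,c) e^{−Mt}, where M = A σ^{2/(γ+2)} ∫_b^c |m₀(θ)|^{γ/(γ+2)} dθ and A = (2/γ)^{γ/(γ+2)} (1/γ + 1/2). -/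
/-!
Fix `t` and `θ`. Integrating `∂ₜ(y/x) = m₀/x²` from `y(0) = 0` and inserting the result into the
definition of `y` gives
`γ xθ(t,θ)/x(t,θ) = σ ∫₀ᵗ x^γ - y/x = ∫₀ᵗ (σ x(τ,θ)^γ + |m₀(θ)|/x(τ,θ)²) dτ`
wherever `m₀ ≤ 0`. By weighted AM-GM the integrand is at least `γ A σ^{2/(γ+2)} |m₀(θ)|^{γ/(γ+2)}`
whatever the value of `x(τ,θ)`, so `∂_θ log x(t,θ) ≥ A σ^{2/(γ+2)} |m₀(θ)|^{γ/(γ+2)} t` on `[b,c]`;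
integrating in `θ` from `b` to `c` gives the claim.
-/

open Set MeasureTheory Real

theorem add_two_div_rpow_mul_add_two_div_rpow {γ : ℝ} (hγ : 0 < γ) :
    ((γ + 2) / 2) ^ (2 / (γ + 2)) * ((γ + 2) / γ) ^ (γ / (γ + 2))
      = γ * ((2 / γ) ^ (γ / (γ + 2)) * (1 / γ + 1 / 2)) := by
  have hγ2 : 0 < γ + 2 := by linarith
  have h2 : (2:ℝ) ^ (2 / (γ + 2)) = 2 / 2 ^ (γ / (γ + 2)) := by
    rw [eq_div_iff (by positivity), ← rpow_add two_pos, ← add_div, add_comm, div_self hγ2.ne',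
      rpow_one]
  have hγ2_pow : (γ + 2) ^ (2 / (γ + 2)) * (γ + 2) ^ (γ / (γ + 2)) = γ + 2 := by
    rw [← rpow_add hγ2, ← add_div, add_comm 2 γ, div_self hγ2.ne', rpow_one]
  rw [div_rpow hγ2.le two_pos.le, div_rpow hγ2.le hγ.le, div_rpow two_pos.le hγ.le, h2]
  field_simp
  rw [hγ2_pow, add_comm]

theorem const_mul_rpow_le_rpow_add_div_sq {γ σ m X : ℝ} (hγ : 0 < γ) (hσ : 0 < σ) (hm : 0 ≤ m)
    (hX : 0 < X) :
    γ * ((2 / γ) ^ (γ / (γ + 2)) * (1 / γ + 1 / 2) * σ ^ (2 / (γ + 2)) * m ^ (γ / (γ + 2)))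
      ≤ σ * X ^ γ + m / X ^ 2 := by
  have hγ2 : 0 < γ + 2 := by linarith
  set f := 2 / (γ + 2) with hf
  set e := γ / (γ + 2) with he
  have hfe : f + e = 1 := by rw [hf, he]; field_simp; ring
  have hX_pow : (X ^ γ) ^ f * (X ^ (-2 : ℝ)) ^ e = 1 := by
    rw [← rpow_mul hX.le, ← rpow_mul hX.le, ← rpow_add hX]
    convert rpow_zero X using 2
    field_simp
    ring
  -- weighted AM-GM with weights `f`, `e`, balanced so that the powers of `X` cancel
  have amgm := geom_mean_le_arith_mean2_weighted (by positivity : 0 ≤ f) (by positivity : 0 ≤ e)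
    (by positivity : 0 ≤ (γ + 2) / 2 * σ * X ^ γ)
    (by positivity : 0 ≤ (γ + 2) / γ * m * X ^ (-2 : ℝ)) hfe
  calc _ = ((γ + 2) / 2) ^ f * ((γ + 2) / γ) ^ e * σ ^ f * m ^ e
          * ((X ^ γ) ^ f * (X ^ (-2 : ℝ)) ^ e) := by
        rw [hX_pow, add_two_div_rpow_mul_add_two_div_rpow hγ]; ring
    _ = ((γ + 2) / 2 * σ * X ^ γ) ^ f * ((γ + 2) / γ * m * X ^ (-2 : ℝ)) ^ e := by
        rw [mul_rpow (by positivity) (by positivity), mul_rpow (by positivity) hσ.le,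
          mul_rpow (by positivity) (by positivity), mul_rpow (by positivity) hm]
        ring
    _ ≤ _ := amgm
    _ = _ := by
        rw [rpow_neg hX.le, rpow_two, hf, he]
        field_simp

theorem integral_eq_sub_of_hasDerivWithinAt_of_Icc_subset {f f' : ℝ → ℝ} {J : Set ℝ} {a b : ℝ}
    (hab : a ≤ b) (hJ : Icc a b ⊆ J) (hf : ∀ s ∈ Icc a b, HasDerivWithinAt f (f' s) J s)
    (hint : IntervalIntegrable f' volume a b) : ∫ s in a..b, f' s = f b - f a :=
  intervalIntegral.integral_eq_sub_of_hasDerivAt_of_le hab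
    (fun s hs => (hf s hs).continuousWithinAt.mono hJ)
    (fun s hs => (hf s (Ioo_subset_Icc_self hs)).hasDerivAt
      (Filter.mem_of_superset (Ioo_mem_nhds hs.1 hs.2) (Ioo_subset_Icc_self.trans hJ)))
    hint

theorem const_mul_rpow_abs_mul_le_div {γ σ m t X' Y : ℝ} {X : ℝ → ℝ} (hγ : 0 < γ) (hσ : 0 < σ)
    (hm : m ≤ 0) (ht : 0 ≤ t) (hX : ContinuousOn X (Icc 0 t)) (hXpos : ∀ τ ∈ Icc 0 t, 0 < X τ)
    (hY : Y / X t = ∫ τ in 0..t, m / X τ ^ 2)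
    (hform : Y = -γ * X' + σ * X t * ∫ τ in 0..t, X τ ^ γ) :
    (2 / γ) ^ (γ / (γ + 2)) * (1 / γ + 1 / 2) * σ ^ (2 / (γ + 2)) * |m| ^ (γ / (γ + 2)) * t
      ≤ X' / X t := by
  set A := (2 / γ) ^ (γ / (γ + 2)) * (1 / γ + 1 / 2) * σ ^ (2 / (γ + 2)) * |m| ^ (γ / (γ + 2))
  have hXt : 0 < X t := hXpos t (right_mem_Icc.2 ht)
  have hpow_int : IntervalIntegrable (fun τ => X τ ^ γ) volume 0 t :=
    (hX.rpow_const fun τ hτ => Or.inl (hXpos τ hτ).ne').intervalIntegrable_of_Icc ht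
  have hdiv_int : IntervalIntegrable (fun τ => m / X τ ^ 2) volume 0 t :=
    (continuousOn_const.div (hX.pow 2) fun τ hτ =>
      pow_ne_zero 2 (hXpos τ hτ).ne').intervalIntegrable_of_Icc ht
  have hlogDeriv : γ * (X' / X t) = ∫ τ in 0..t, (σ * X τ ^ γ - m / X τ ^ 2) := by
    rw [intervalIntegral.integral_sub (hpow_int.const_mul σ) hdiv_int,
      intervalIntegral.integral_const_mul, ← hY, hform]
    field_simp
    ring
  have hlower : ∫ _ in 0..t, γ * A ≤ ∫ τ in 0..t, (σ * X τ ^ γ - m / X τ ^ 2) := by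
    refine intervalIntegral.integral_mono_on ht intervalIntegrable_const
      ((hpow_int.const_mul σ).sub hdiv_int) fun τ hτ => ?_
    rw [sub_eq_add_neg, ← neg_div, ← abs_of_nonpos hm]
    exact const_mul_rpow_le_rpow_add_div_sq hγ hσ (abs_nonneg m) (hXpos τ hτ)
  rw [intervalIntegral.integral_const, smul_eq_mul, sub_zero, ← hlogDeriv] at hlower
  exact le_of_mul_le_mul_left (by linarith) hγ

theorem le_mul_exp_neg_integral_of_le_logDeriv {g g' φ : ℝ → ℝ} {b c : ℝ} (hbc : b ≤ c)
    (hg : ∀ θ ∈ Icc b c, HasDerivAt g (g' θ) θ) (hpos : ∀ θ ∈ Icc b c, 0 < g θ)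
    (hφ : IntegrableOn φ (Icc b c)) (hle : ∀ θ ∈ Ioo b c, φ θ ≤ g' θ / g θ) :
    g b ≤ g c * exp (-∫ θ in b..c, φ θ) := by
  have hlog (θ : ℝ) (hθ : θ ∈ Icc b c) : HasDerivAt (fun θ => log (g θ)) (g' θ / g θ) θ :=
    (hg θ hθ).log (hpos θ hθ).ne'
  have key := intervalIntegral.integral_le_sub_of_hasDeriv_right_of_le hbc
    (fun θ hθ => (hlog θ hθ).continuousAt.continuousWithinAt)
    (fun θ hθ => (hlog θ (Ioo_subset_Icc_self hθ)).hasDerivWithinAt) hφ hle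
  have := exp_le_exp.2 (le_sub_comm.1 key)
  rwa [sub_eq_add_neg, exp_add, exp_log (hpos b (left_mem_Icc.2 hbc)),
    exp_log (hpos c (right_mem_Icc.2 hbc))] at this

theorem stmt_12_general
    -- hypothesis (H)
    (γ σ : ℝ) (hγ : 0 < γ) (hσ : 0 < σ)
    (T : EReal)
    (J : Set ℝ) (hJ : J = {t : ℝ | 0 ≤ t ∧ (t : EReal) < T})
    (m₀ : ℝ → ℝ) (hm₀cont : Continuous m₀)
    (x y xθ : ℝ → ℝ → ℝ)
    (hxcont : ContinuousOn (fun p : ℝ × ℝ => x p.1 p.2) (J ×ˢ univ))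
    (hxθ : ∀ t ∈ J, ∀ θ : ℝ, HasDerivAt (x t) (xθ t θ) θ)
    (hxpos : ∀ t ∈ J, ∀ θ : ℝ, 0 < x t θ)
    (hy0 : ∀ θ : ℝ, y 0 θ = 0)
    (hyform : ∀ t ∈ J, ∀ θ : ℝ,
      y t θ = -γ * xθ t θ + σ * x t θ * ∫ τ in (0:ℝ)..t, x τ θ ^ γ)
    (hratio : ∀ θ : ℝ, ∀ t ∈ J,
      HasDerivWithinAt (fun s => y s θ / x s θ) (m₀ θ / x t θ ^ 2) J t)
    -- points a ≤ b < c ≤ d in [0,1] with m₀ ≤ 0 on [a,d]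
    (a b c d : ℝ) (hab : a ≤ b) (hbc : b < c) (hcd : c ≤ d)
    (hm : ∀ θ ∈ Icc a d, m₀ θ ≤ 0) :
    ∀ t ∈ J, x t b ≤ x t c * Real.exp
      (-((2 / γ) ^ (γ / (γ + 2)) * (1 / γ + 1 / 2) * σ ^ (2 / (γ + 2))
          * (∫ θ in b..c, |m₀ θ| ^ (γ / (γ + 2))) * t)) := by
  intro t ht
  obtain ⟨ht0, htT⟩ : 0 ≤ t ∧ (t : EReal) < T := by rwa [hJ] at ht
  have hIcc : Icc 0 t ⊆ J := by
    rw [hJ]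
    exact fun s hs => ⟨hs.1, (EReal.coe_le_coe_iff.2 hs.2).trans_lt htT⟩
  have hslice (θ : ℝ) : ContinuousOn (fun τ => x τ θ) (Icc 0 t) :=
    hxcont.comp (continuous_id.prodMk continuous_const).continuousOn
      fun s hs => ⟨hIcc hs, mem_univ _⟩
  have hratio_eq (θ : ℝ) : y t θ / x t θ = ∫ τ in 0..t, m₀ θ / x τ θ ^ 2 := by
    rw [integral_eq_sub_of_hasDerivWithinAt_of_Icc_subset ht0 hIcc
      (fun s hs => hratio θ s (hIcc hs))
      ((continuousOn_const.div ((hslice θ).pow 2) fun s hs =>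
        pow_ne_zero 2 (hxpos s (hIcc hs) θ).ne').intervalIntegrable_of_Icc ht0),
      hy0, zero_div, sub_zero]
  have hlogDeriv_ge : ∀ θ ∈ Ioo b c, (2 / γ) ^ (γ / (γ + 2)) * (1 / γ + 1 / 2)
      * σ ^ (2 / (γ + 2)) * |m₀ θ| ^ (γ / (γ + 2)) * t ≤ xθ t θ / x t θ := fun θ hθ =>
    const_mul_rpow_abs_mul_le_div hγ hσ (hm θ ⟨hab.trans hθ.1.le, hθ.2.le.trans hcd⟩) ht0
      (hslice θ) (fun s hs => hxpos s (hIcc hs) θ) (hratio_eq θ) (hyform t ht θ)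
  have key := le_mul_exp_neg_integral_of_le_logDeriv hbc.le (fun θ _ => hxθ t ht θ)
    (fun θ _ => hxpos t ht θ)
    (φ := fun θ => (2 / γ) ^ (γ / (γ + 2)) * (1 / γ + 1 / 2)
      * σ ^ (2 / (γ + 2)) * |m₀ θ| ^ (γ / (γ + 2)) * t)
    ((continuous_const.mul (hm₀cont.abs.rpow_const fun _ => Or.inr (by positivity))).mul
      continuous_const).integrableOn_Icc
    hlogDeriv_ge
  rwa [intervalIntegral.integral_mul_const, intervalIntegral.integral_const_mul] at key

/-- under hypothesis (H), if m₀ ≤ 0 on [a,d] and a ≤ b < c ≤ d, then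
x(t,b) ≤ x(t,c) e^{-Mt} with M = A σ^{2/(γ+2)} ∫_b^c |m₀|^{γ/(γ+2)} and
A = (2/γ)^{γ/(γ+2)} (1/γ + 1/2). -/
theorem stmt_12
    -- hypothesis (H)
    (γ σ : ℝ) (hγ : 0 < γ) (hσ : 0 < σ)
    (T : EReal) (hT : 0 < T)
    (J : Set ℝ) (hJ : J = {t : ℝ | 0 ≤ t ∧ (t : EReal) < T})
    (m₀ : ℝ → ℝ) (hm₀cont : Continuous m₀) (hm₀per : ∀ θ : ℝ, m₀ (θ + 1) = m₀ θ)
    (x y xθ : ℝ → ℝ → ℝ)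
    (hxcont : ContinuousOn (fun p : ℝ × ℝ => x p.1 p.2) (J ×ˢ univ))
    (hycont : ContinuousOn (fun p : ℝ × ℝ => y p.1 p.2) (J ×ˢ univ))
    (hxper : ∀ t ∈ J, ∀ θ : ℝ, x t (θ + 1) = x t θ)
    (hyper : ∀ t ∈ J, ∀ θ : ℝ, y t (θ + 1) = y t θ)
    (hxθ : ∀ t ∈ J, ∀ θ : ℝ, HasDerivAt (x t) (xθ t θ) θ)
    (hyC1 : ∀ t ∈ J, ∀ θ : ℝ, DifferentiableAt ℝ (y t) θ)
    (hxpos : ∀ t ∈ J, ∀ θ : ℝ, 0 < x t θ)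
    (hy0 : ∀ θ : ℝ, y 0 θ = 0)
    (hyform : ∀ t ∈ J, ∀ θ : ℝ,
      y t θ = -γ * xθ t θ + σ * x t θ * ∫ τ in (0:ℝ)..t, x τ θ ^ γ)
    (hratio : ∀ θ : ℝ, ∀ t ∈ J,
      HasDerivWithinAt (fun s => y s θ / x s θ) (m₀ θ / x t θ ^ 2) J t)
    (hxint : ∀ t ∈ J, (∫ θ in (0:ℝ)..1, x t θ ^ γ) = 1)
    -- points a ≤ b < c ≤ d in [0,1] with m₀ ≤ 0 on [a,d]
    (a b c d : ℝ) (ha : 0 ≤ a) (hab : a ≤ b) (hbc : b < c) (hcd : c ≤ d) (hd : d ≤ 1)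
    (hm : ∀ θ ∈ Icc a d, m₀ θ ≤ 0) :
    ∀ t ∈ J, x t b ≤ x t c * Real.exp
      (-((2 / γ) ^ (γ / (γ + 2)) * (1 / γ + 1 / 2) * σ ^ (2 / (γ + 2))
          * (∫ θ in b..c, |m₀ θ| ^ (γ / (γ + 2))) * t)) :=
  stmt_12_general γ σ hγ hσ T J hJ m₀ hm₀cont x y xθ hxcont hxθ hxpos hy0 hyform hratio a b c d hab
    hbc hcd hm
end

section
/- Assume hypothesis (H), let a < b ≤ d in [0,1] with m₀(θ) ≤ 0 on [a,d] and m₀(θ) < 0 for all θ ∈ (a,b), and assume in addition that x and y are C¹ in t and satisfy the angular momentum identity x(t,θ) y_t(t,θ) − y(t,θ) x_t(t,θ) = m₀(θ) for all (t,θ). Then for every t ∈ (0,T) one has y(t,θ) < 0 for all θ ∈ (a,b), and ∫_a^b x_t(t,θ)/x(t,θ) dθ ≤ ∫_a^b y_t(t,θ)/y(t,θ) dθ − N / x(t,b)², where N = (2/γ) (∫_a^b √|m₀(θ)| dθ)². -/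
/-!
Integrating `∂ₜ (y / x) = m₀ / x²` from `y(0) = 0` gives `y = m₀ x q` with
`q(t, θ) = ∫₀ᵗ x⁻² > 0`, so `y < 0` where `m₀ < 0`. The angular momentum identity then reads
`yₜ / y - xₜ / x = m₀ / (x y) = 1 / (x² q) =: H`. With `W = -x y ≥ 0` one has `H W = |m₀|`, so
Cauchy–Schwarz gives `(∫ √|m₀|)² ≤ ∫ H · ∫ W`, while `y = -γ x_θ + σ x ∫₀ᵗ x^γ` gives
`W ≤ (γ / 2) ∂_θ (x²)`, hence `∫ₐᵇ W ≤ (γ / 2) x(t, b)²`.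

The integrals of `xₜ / x` and `yₜ / y` exist because `∂_θ log x = (σ ∫₀ᵗ x^γ - m₀ q) / γ` is
differentiable in `t` with continuous derivative, so `xₜ / x = ∂ₜ log x` is continuous in `θ`.
-/

open Set Filter Topology MeasureTheory intervalIntegral

theorem sq_integral_mul_le_integral_sq_mul_integral_sq {u v : ℝ → ℝ} {a b : ℝ} (hab : a ≤ b)
    (hu : ContinuousOn u (Icc a b)) (hv : ContinuousOn v (Icc a b)) :
    (∫ θ in a..b, u θ * v θ) ^ 2 ≤ (∫ θ in a..b, u θ ^ 2) * ∫ θ in a..b, v θ ^ 2 := by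
  have huu : IntervalIntegrable (fun θ => u θ ^ 2) volume a b :=
    (hu.pow 2).intervalIntegrable_of_Icc hab
  have huv : IntervalIntegrable (fun θ => u θ * v θ) volume a b :=
    (hu.mul hv).intervalIntegrable_of_Icc hab
  have hvv : IntervalIntegrable (fun θ => v θ ^ 2) volume a b :=
    (hv.pow 2).intervalIntegrable_of_Icc hab
  have hquad : ∀ l : ℝ, 0 ≤ (∫ θ in a..b, v θ ^ 2) * (l * l)
      + (-2 * ∫ θ in a..b, u θ * v θ) * l + ∫ θ in a..b, u θ ^ 2 := by
    intro l
    have hexp : ∫ θ in a..b, (u θ - l * v θ) ^ 2 = (∫ θ in a..b, v θ ^ 2) * (l * l)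
        + (-2 * ∫ θ in a..b, u θ * v θ) * l + ∫ θ in a..b, u θ ^ 2 := by
      have h := integral_add (huu.sub (huv.const_mul (2 * l))) (hvv.const_mul (l ^ 2))
      rw [integral_sub huu (huv.const_mul _), intervalIntegral.integral_const_mul,
        intervalIntegral.integral_const_mul] at h
      rw [show (fun θ => (u θ - l * v θ) ^ 2)
          = fun θ => u θ ^ 2 - 2 * l * (u θ * v θ) + l ^ 2 * v θ ^ 2 by ext; ring, h]
      ring
    exact hexp ▸ integral_nonneg hab fun _ _ => sq_nonneg _
  have := discrim_le_zero hquad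
  rw [discrim] at this
  linarith

theorem sq_integral_sqrt_mul_le {f g : ℝ → ℝ} {a b : ℝ} (hab : a ≤ b)
    (hf : ContinuousOn f (Icc a b)) (hg : ContinuousOn g (Icc a b))
    (hf0 : ∀ θ ∈ Ioo a b, 0 ≤ f θ) (hg0 : ∀ θ ∈ Ioo a b, 0 ≤ g θ) :
    (∫ θ in a..b, √(f θ * g θ)) ^ 2 ≤ (∫ θ in a..b, f θ) * ∫ θ in a..b, g θ := by
  convert sq_integral_mul_le_integral_sq_mul_integral_sq hab hf.sqrt hg.sqrt using 2
  · exact integral_congr_Ioo_of_le hab fun θ hθ => Real.sqrt_mul (hf0 θ hθ) _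
  · exact integral_congr_Ioo_of_le hab fun θ hθ => (Real.sq_sqrt (hf0 θ hθ)).symm
  · exact integral_congr_Ioo_of_le hab fun θ hθ => (Real.sq_sqrt (hg0 θ hθ)).symm

theorem sq_integral_sqrt_mul_div_le_integral {f g : ℝ → ℝ} {a b K : ℝ} (hab : a ≤ b)
    (hf : ContinuousOn f (Icc a b)) (hg : ContinuousOn g (Icc a b))
    (hf0 : ∀ θ ∈ Ioo a b, 0 ≤ f θ) (hg0 : ∀ θ ∈ Ioo a b, 0 ≤ g θ)
    (hK : 0 < K) (hgK : ∫ θ in a..b, g θ ≤ K) :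
    (∫ θ in a..b, √(f θ * g θ)) ^ 2 / K ≤ ∫ θ in a..b, f θ := by
  have hf_int : 0 ≤ ∫ θ in a..b, f θ := by
    refine integral_nonneg_of_ae_restrict hab ?_
    rw [← Measure.restrict_congr_set Ioo_ae_eq_Icc]
    exact (ae_restrict_iff' measurableSet_Ioo).2 (.of_forall hf0)
  rw [div_le_iff₀ hK]
  exact (sq_integral_sqrt_mul_le hab hf hg hf0 hg0).trans (mul_le_mul_of_nonneg_left hgK hf_int)

theorem integral_neg_mul_le_half_mul_sq {f f' g k : ℝ → ℝ} {γ a b : ℝ} (hγ : 0 ≤ γ)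
    (hab : a ≤ b) (hf : ∀ θ, HasDerivAt f (f' θ) θ) (hg : ContinuousOn g (Icc a b))
    (hk : ∀ θ ∈ Ioo a b, 0 ≤ k θ) (hgf : ∀ θ ∈ Ioo a b, g θ = -γ * f' θ + f θ * k θ) :
    ∫ θ in a..b, -(f θ * g θ) ≤ γ / 2 * f b ^ 2 := by
  have hfc : Continuous f := continuous_iff_continuousAt.2 fun θ => (hf θ).continuousAt
  -- `-(f g) = γ f f' - f² k ≤ (γ / 2 · f²)'`
  have hle := integral_le_sub_of_hasDeriv_right_of_le
    (g := fun θ => γ / 2 * f θ ^ 2) (g' := fun θ => γ * (f θ * f' θ))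
    (φ := fun θ => -(f θ * g θ)) hab (by fun_prop)
    (fun θ _ => by
      refine ((((hf θ).pow 2).const_mul (γ / 2)).congr_deriv ?_).hasDerivWithinAt
      push_cast
      ring)
    ((hfc.continuousOn.mul hg).neg.integrableOn_Icc)
    (fun θ hθ => by
      rw [hgf θ hθ]
      nlinarith [mul_nonneg (sq_nonneg (f θ)) (hk θ hθ)])
  nlinarith [sq_nonneg (f a)]

theorem eq_mul_integral_inv_sq_of_hasDerivWithinAt_div {u v : ℝ → ℝ} {m a s : ℝ} (has : a ≤ s)
    (hv : ContinuousOn v (Icc a s)) (hv0 : ∀ τ ∈ Icc a s, 0 < v τ) (hu0 : u a = 0)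
    (huv : ∀ τ ∈ Icc a s, HasDerivWithinAt (fun r => u r / v r) (m / v τ ^ 2) (Icc a s) τ) :
    u s = m * v s * ∫ τ in a..s, (v τ ^ 2)⁻¹ := by
  have hftc := integral_eq_sub_of_hasDerivAt_of_le has
    (fun τ hτ => (huv τ hτ).continuousWithinAt)
    (fun τ hτ => (huv τ (Ioo_subset_Icc_self hτ)).hasDerivAt (Icc_mem_nhds hτ.1 hτ.2))
    ((continuousOn_const.div (hv.pow 2) fun τ hτ =>
      (pow_pos (hv0 τ hτ) 2).ne').intervalIntegrable_of_Icc has)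
  simp only [hu0, zero_div, sub_zero, div_eq_mul_inv m, intervalIntegral.integral_const_mul] at hftc
  have := (hv0 s ⟨has, le_rfl⟩).ne'
  field_simp at hftc ⊢
  linarith

theorem hasDerivAt_intervalIntegral_of_continuous_partial {c e : ℝ → ℝ → ℝ}
    (hc : Continuous (Function.uncurry c)) (he : Continuous (Function.uncurry e))
    (hce : ∀ s u, HasDerivAt (c · u) (e s u) s) (a b t : ℝ) :
    HasDerivAt (fun s => ∫ u in a..b, c s u) (∫ u in a..b, e t u) t := by
  obtain ⟨M, hM⟩ := ((isCompact_closedBall t 1).prod (isCompact_uIcc (a := a) (b := b))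
    ).exists_bound_of_continuousOn he.continuousOn
  have hbound : ∀ᵐ u ∂volume, u ∈ uIoc a b → ∀ s ∈ Metric.ball t 1, ‖e s u‖ ≤ M :=
    .of_forall fun u hu s hs =>
      hM (s, u) ⟨Metric.ball_subset_closedBall hs, uIoc_subset_uIcc hu⟩
  exact (hasDerivAt_integral_of_dominated_loc_of_deriv_le (Metric.ball_mem_nhds t one_pos)
    (.of_forall fun s => (hc.uncurry_left s).aestronglyMeasurable)
    ((hc.uncurry_left t).intervalIntegrable a b) (he.uncurry_left t).aestronglyMeasurable
    hbound intervalIntegrable_const (.of_forall fun u _ s _ => hce s u)).2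

theorem log_sub_log_eq_integral {f g : ℝ → ℝ} (hf : ∀ u, 0 < f u) (hg : Continuous g)
    (hfg : ∀ u, HasDerivAt f (f u * g u) u) (a b : ℝ) :
    Real.log (f b) - Real.log (f a) = ∫ u in a..b, g u := by
  refine (integral_eq_sub_of_hasDerivAt (f := fun u => Real.log (f u)) (fun u _ => ?_)
    (hg.intervalIntegrable a b)).symm
  simpa [(hf u).ne'] using (hfg u).log (hf u).ne'

theorem continuous_div_of_hasDerivAt_mul {x c e : ℝ → ℝ → ℝ} {xt : ℝ → ℝ} {t : ℝ}
    (hc : Continuous (Function.uncurry c)) (he : Continuous (Function.uncurry e))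
    (hce : ∀ s u, HasDerivAt (c · u) (e s u) s)
    (hx : ∀ᶠ s in 𝓝 t, ∀ θ, 0 < x s θ ∧ HasDerivAt (x s) (x s θ * c s θ) θ)
    (hxt : ∀ θ, HasDerivAt (x · θ) (xt θ) t) :
    Continuous fun θ => xt θ / x t θ := by
  have hpos : ∀ θ, 0 < x t θ := fun θ => (hx.self_of_nhds θ).1
  have hlog : ∀ θ, xt θ / x t θ = xt 0 / x t 0 + ∫ u in (0 : ℝ)..θ, e t u := by
    intro θ
    have hsub := ((hxt θ).log (hpos θ).ne').sub ((hxt 0).log (hpos 0).ne')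
    have hint := (hasDerivAt_intervalIntegral_of_continuous_partial hc he hce 0 θ t)
      |>.congr_of_eventuallyEq <| hx.mono fun s hs =>
        log_sub_log_eq_integral (fun u => (hs u).1) (hc.uncurry_left s) (fun u => (hs u).2) 0 θ
    linarith [hsub.unique hint]
  rw [show (fun θ => xt θ / x t θ) = _ from funext hlog]
  exact continuous_const.add <| continuous_primitive
    (fun _ _ => (he.uncurry_left t).intervalIntegrable _ _) 0

theorem exists_continuous_eqOn_Icc {f : ℝ → ℝ → ℝ} {a b : ℝ} (hab : a ≤ b)
    (hf : ContinuousOn (Function.uncurry f) (Icc a b ×ˢ univ)) :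
    ∃ F : ℝ → ℝ → ℝ, Continuous (Function.uncurry F) ∧ ∀ s ∈ Icc a b, F s = f s := by
  refine ⟨fun s => f (projIcc a b hab s), ?_, fun s hs => by simp [projIcc_of_mem hab hs]⟩
  exact hf.comp_continuous (f := fun p : ℝ × ℝ => ((projIcc a b hab p.1 : ℝ), p.2))
    (by fun_prop) fun p => ⟨(projIcc a b hab p.1).2, mem_univ _⟩

theorem intervalIntegrable_of_continuousOn_Icc_prod {F : ℝ → ℝ → ℝ} {a b s : ℝ}
    (hF : ContinuousOn (Function.uncurry F) (Icc a b ×ˢ univ)) (hs : s ∈ Icc a b) (θ : ℝ) :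
    IntervalIntegrable (F · θ) volume a s :=
  (hF.comp (continuous_id.prodMk continuous_const : Continuous fun τ : ℝ => (τ, θ)).continuousOn
    fun _ hτ => ⟨Icc_subset_Icc_right hs.2 hτ, mem_univ _⟩).intervalIntegrable_of_Icc hs.1

theorem continuous_intervalIntegral_of_continuousOn_Icc_prod {F : ℝ → ℝ → ℝ} {a b s : ℝ}
    (hF : ContinuousOn (Function.uncurry F) (Icc a b ×ˢ univ)) (hs : s ∈ Icc a b) :
    Continuous fun θ => ∫ τ in a..s, F τ θ := by
  obtain ⟨G, hG, hGF⟩ := exists_continuous_eqOn_Icc (hs.1.trans hs.2) hF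
  refine (continuous_parametric_intervalIntegral_of_continuous' (μ := volume)
    (f := fun θ τ => G τ θ) (hG.comp continuous_swap) a s).congr fun θ => ?_
  refine integral_congr fun τ hτ => ?_
  rw [uIcc_of_le hs.1] at hτ
  simp only [hGF τ (Icc_subset_Icc_right hs.2 hτ)]

theorem continuous_div_of_hasDerivAt_mul_primitive {x φ : ℝ → ℝ → ℝ} {xt : ℝ → ℝ} {t t' : ℝ}
    (ht : t ∈ Ioo 0 t') (hφ : ContinuousOn (Function.uncurry φ) (Icc 0 t' ×ˢ univ))
    (hx : ∀ s ∈ Icc 0 t', ∀ θ,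
      0 < x s θ ∧ HasDerivAt (x s) (x s θ * ∫ τ in (0 : ℝ)..s, φ τ θ) θ)
    (hxt : ∀ θ, HasDerivAt (x · θ) (xt θ) t) :
    Continuous fun θ => xt θ / x t θ := by
  obtain ⟨Φ, hΦ, hΦφ⟩ := exists_continuous_eqOn_Icc (ht.1.le.trans ht.2.le) hφ
  refine continuous_div_of_hasDerivAt_mul (c := fun s θ => ∫ τ in (0 : ℝ)..s, Φ τ θ)
    ((continuous_parametric_primitive_of_continuous (μ := volume) (f := fun θ τ => Φ τ θ)
      (hΦ.comp continuous_swap)).comp continuous_swap) hΦ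
    (fun s θ => ((hΦ.uncurry_right θ).integral_hasStrictDerivAt 0 s).hasDerivAt) ?_ hxt
  filter_upwards [Icc_mem_nhds ht.1 ht.2] with s hs θ
  refine (hx s hs θ).imp_right fun h => h.congr_deriv ?_
  congr 1
  refine integral_congr fun τ hτ => ?_
  rw [uIcc_of_le hs.1] at hτ
  simp only [hΦφ τ (Icc_subset_Icc_right hs.2 hτ)]

theorem continuous_div_of_eq_mul_integral_inv_sq {γ σ t t' : ℝ} {m₀ : ℝ → ℝ}
    {x xθ y : ℝ → ℝ → ℝ} {xt : ℝ → ℝ} (hγ : γ ≠ 0) (ht : t ∈ Ioo 0 t') (hm₀ : Continuous m₀)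
    (hx : ContinuousOn (Function.uncurry x) (Icc 0 t' ×ˢ univ))
    (hxpos : ∀ s ∈ Icc 0 t', ∀ θ, 0 < x s θ)
    (hxθ : ∀ s ∈ Icc 0 t', ∀ θ, HasDerivAt (x s) (xθ s θ) θ)
    (hy : ∀ s ∈ Icc 0 t', ∀ θ, y s θ = m₀ θ * x s θ * ∫ τ in (0 : ℝ)..s, (x τ θ ^ 2)⁻¹)
    (hyx : ∀ s ∈ Icc 0 t', ∀ θ,
      y s θ = -γ * xθ s θ + σ * x s θ * ∫ τ in (0 : ℝ)..s, x τ θ ^ γ)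
    (hxt : ∀ θ, HasDerivAt (x · θ) (xt θ) t) :
    Continuous fun θ => xt θ / x t θ := by
  have hx0 : ∀ p ∈ Icc 0 t' ×ˢ (univ : Set ℝ), x p.1 p.2 ≠ 0 :=
    fun p hp => (hxpos _ hp.1 _).ne'
  have hxinv : ContinuousOn (Function.uncurry fun τ θ => (x τ θ ^ 2)⁻¹) (Icc 0 t' ×ˢ univ) :=
    (hx.pow 2).inv₀ fun p hp => pow_ne_zero 2 (hx0 p hp)
  have hxrpow : ContinuousOn (Function.uncurry fun τ θ => x τ θ ^ γ) (Icc 0 t' ×ˢ univ) :=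
    hx.rpow_const fun p hp => .inl (hx0 p hp)
  set φ : ℝ → ℝ → ℝ := fun τ θ => (σ * x τ θ ^ γ - m₀ θ * (x τ θ ^ 2)⁻¹) / γ with hφ
  have hφc : ContinuousOn (Function.uncurry φ) (Icc 0 t' ×ˢ univ) :=
    ((continuousOn_const.mul hxrpow).sub
      ((hm₀.comp continuous_snd).continuousOn.mul hxinv)).div_const γ
  refine continuous_div_of_hasDerivAt_mul_primitive ht hφc (fun s hs θ => ⟨hxpos s hs θ, ?_⟩) hxt
  have hφint : ∫ τ in (0 : ℝ)..s, φ τ θ = (σ * (∫ τ in (0 : ℝ)..s, x τ θ ^ γ)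
      - m₀ θ * ∫ τ in (0 : ℝ)..s, (x τ θ ^ 2)⁻¹) / γ := by
    rw [hφ, intervalIntegral.integral_div,
      integral_sub ((intervalIntegrable_of_continuousOn_Icc_prod hxrpow hs θ).const_mul σ)
        ((intervalIntegrable_of_continuousOn_Icc_prod hxinv hs θ).const_mul _),
      intervalIntegral.integral_const_mul, intervalIntegral.integral_const_mul]
  -- eliminating `y` between `hy` and `hyx` gives `xθ = x ∫₀ˢ φ`
  have h := hyx s hs θ
  rw [hy s hs θ] at h
  convert hxθ s hs θ using 1
  rw [hφint, mul_div_assoc', div_eq_iff hγ]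
  linarith

theorem neg_and_integral_div_le_integral_div_sub {x x' y xt yt m q k : ℝ → ℝ} {γ a b : ℝ}
    (hγ : 0 < γ) (hab : a < b) (hx : ∀ θ, HasDerivAt x (x' θ) θ) (hxpos : ∀ θ, 0 < x θ)
    (hm : Continuous m) (hmneg : ∀ θ ∈ Ioo a b, m θ < 0)
    (hq : Continuous q) (hqpos : ∀ θ, 0 < q θ) (hy : ∀ θ, y θ = m θ * x θ * q θ)
    (hk : ∀ θ ∈ Ioo a b, 0 ≤ k θ) (hyx : ∀ θ ∈ Ioo a b, y θ = -γ * x' θ + x θ * k θ)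
    (hxt : Continuous fun θ => xt θ / x θ)
    (hang : ∀ θ ∈ Ioo a b, x θ * yt θ - y θ * xt θ = m θ) :
    (∀ θ ∈ Ioo a b, y θ < 0) ∧
      ∫ θ in a..b, xt θ / x θ
        ≤ (∫ θ in a..b, yt θ / y θ) - 2 / γ * (∫ θ in a..b, √|m θ|) ^ 2 / x b ^ 2 := by
  have hyneg : ∀ θ ∈ Ioo a b, y θ < 0 := fun θ hθ => by
    rw [hy θ]
    exact mul_neg_of_neg_of_pos (mul_neg_of_neg_of_pos (hmneg θ hθ) (hxpos θ)) (hqpos θ)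
  refine ⟨hyneg, ?_⟩
  set H : ℝ → ℝ := fun θ => (x θ ^ 2 * q θ)⁻¹ with hH
  have hxc : Continuous x := continuous_iff_continuousAt.2 fun θ => (hx θ).continuousAt
  have hyc : Continuous y := by
    rw [funext hy]
    exact (hm.mul hxc).mul hq
  have hHpos : ∀ θ, 0 < H θ := fun θ => inv_pos.2 (mul_pos (pow_pos (hxpos θ) 2) (hqpos θ))
  have hHc : Continuous H :=
    ((hxc.pow 2).mul hq).inv₀ fun θ => (inv_pos.1 (hHpos θ)).ne'
  have hsplit : ∫ θ in a..b, yt θ / y θ = (∫ θ in a..b, xt θ / x θ) + ∫ θ in a..b, H θ := by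
    rw [← integral_add (hxt.intervalIntegrable a b) (hHc.intervalIntegrable a b)]
    refine integral_congr_Ioo_of_le hab.le fun θ hθ => ?_
    have hmom := hang θ hθ
    rw [hy θ] at hmom ⊢
    have hm0 := (hmneg θ hθ).ne
    have hx0 := (hxpos θ).ne'
    have hq0 := (hqpos θ).ne'
    simp only [hH]
    field_simp
    linear_combination hmom
  have hsqrt : ∫ θ in a..b, √|m θ| = ∫ θ in a..b, √(H θ * -(x θ * y θ)) :=
    integral_congr_Ioo_of_le hab.le fun θ hθ => by
      have hx0 := (hxpos θ).ne'
      have hq0 := (hqpos θ).ne'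
      rw [hy θ, abs_of_neg (hmneg θ hθ), hH]
      field_simp
  have hK : 0 < γ / 2 * x b ^ 2 := mul_pos (half_pos hγ) (pow_pos (hxpos b) 2)
  have hCS := sq_integral_sqrt_mul_div_le_integral (g := fun θ => -(x θ * y θ))
    hab.le hHc.continuousOn (hxc.mul hyc).neg.continuousOn (fun θ _ => (hHpos θ).le)
    (fun θ hθ => neg_nonneg.2 (mul_nonpos_of_nonneg_of_nonpos (hxpos θ).le (hyneg θ hθ).le))
    hK (integral_neg_mul_le_half_mul_sq hγ.le hab.le hx hyc.continuousOn hk hyx)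
  have hN : 2 / γ * (∫ θ in a..b, √(H θ * -(x θ * y θ))) ^ 2 / x b ^ 2
      = (∫ θ in a..b, √(H θ * -(x θ * y θ))) ^ 2 / (γ / 2 * x b ^ 2) := by
    field_simp
  rw [hsplit, hsqrt, hN]
  linarith

theorem exists_Icc_subset_of_lt {T : EReal} {t : ℝ} (ht : (t : EReal) < T) :
    ∃ t' > t, Icc 0 t' ⊆ {s : ℝ | 0 ≤ s ∧ (s : EReal) < T} := by
  obtain ⟨t', htt', ht'T⟩ := EReal.lt_iff_exists_real_btwn.mp ht
  exact ⟨t', by exact_mod_cast htt', fun s hs =>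
    ⟨hs.1, lt_of_le_of_lt (by exact_mod_cast hs.2) ht'T⟩⟩

theorem stmt_13_general
    -- hypothesis (H)
    (γ σ : ℝ) (hγ : 0 < γ) (hσ : 0 < σ)
    (T : EReal)
    (J : Set ℝ) (hJ : J = {t : ℝ | 0 ≤ t ∧ (t : EReal) < T})
    (m₀ : ℝ → ℝ) (hm₀cont : Continuous m₀)
    (x y xθ : ℝ → ℝ → ℝ)
    (hxcont : ContinuousOn (fun p : ℝ × ℝ => x p.1 p.2) (J ×ˢ univ))
    (hxθ : ∀ t ∈ J, ∀ θ : ℝ, HasDerivAt (x t) (xθ t θ) θ)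
    (hxpos : ∀ t ∈ J, ∀ θ : ℝ, 0 < x t θ)
    (hy0 : ∀ θ : ℝ, y 0 θ = 0)
    (hyform : ∀ t ∈ J, ∀ θ : ℝ,
      y t θ = -γ * xθ t θ + σ * x t θ * ∫ τ in (0:ℝ)..t, x τ θ ^ γ)
    (hratio : ∀ θ : ℝ, ∀ t ∈ J,
      HasDerivWithinAt (fun s => y s θ / x s θ) (m₀ θ / x t θ ^ 2) J t)
    -- x and y are C¹ in t
    (xt yt : ℝ → ℝ → ℝ)
    (hxt : ∀ θ : ℝ, ∀ t ∈ J, HasDerivWithinAt (fun s => x s θ) (xt t θ) J t)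
    -- conserved angular momentum
    (hang : ∀ t ∈ J, ∀ θ : ℝ, x t θ * yt t θ - y t θ * xt t θ = m₀ θ)
    -- points a < b ≤ d in [0,1] with m₀ ≤ 0 on [a,d] and m₀ < 0 on (a,b)
    (a b : ℝ) (hab : a < b)
    (hmneg : ∀ θ ∈ Ioo a b, m₀ θ < 0) :
    ∀ t ∈ J, 0 < t →
      (∀ θ ∈ Ioo a b, y t θ < 0) ∧
      (∫ θ in a..b, xt t θ / x t θ)
        ≤ (∫ θ in a..b, yt t θ / y t θ)
          - (2 / γ) * (∫ θ in a..b, Real.sqrt |m₀ θ|) ^ 2 / x t b ^ 2 := by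
  intro t ht ht0
  subst hJ
  obtain ⟨t', htt', hS⟩ := exists_Icc_subset_of_lt ht.2
  have htS : t ∈ Icc 0 t' := ⟨ht0.le, htt'.le⟩
  have hxS : ContinuousOn (Function.uncurry x) (Icc 0 t' ×ˢ univ) :=
    hxcont.mono (prod_mono hS subset_rfl)
  have hy : ∀ s ∈ Icc 0 t', ∀ θ, y s θ = m₀ θ * x s θ * ∫ τ in (0 : ℝ)..s, (x τ θ ^ 2)⁻¹ := by
    intro s hs θ
    have hsJ := (Icc_subset_Icc_right hs.2).trans hS
    exact eq_mul_integral_inv_sq_of_hasDerivWithinAt_div hs.1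
      (fun τ hτ => (hxt θ τ (hsJ hτ)).continuousWithinAt.mono hsJ)
      (fun τ hτ => hxpos τ (hsJ hτ) θ) (hy0 θ) (fun τ hτ => (hratio θ τ (hsJ hτ)).mono hsJ)
  have hxt_div : Continuous fun θ => xt t θ / x t θ :=
    continuous_div_of_eq_mul_integral_inv_sq hγ.ne' ⟨ht0, htt'⟩ hm₀cont hxS
      (fun s hs => hxpos s (hS hs)) (fun s hs => hxθ s (hS hs)) hy (fun s hs => hyform s (hS hs))
      (fun θ => (hxt θ t ht).hasDerivAt (mem_of_superset (Icc_mem_nhds ht0 htt') hS))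
  have hxinv : ContinuousOn (Function.uncurry fun τ θ => (x τ θ ^ 2)⁻¹) (Icc 0 t' ×ˢ univ) :=
    (hxS.pow 2).inv₀ fun p hp => (pow_pos (hxpos _ (hS hp.1) _) 2).ne'
  exact neg_and_integral_div_le_integral_div_sub hγ hab (hxθ t ht) (hxpos t ht) hm₀cont hmneg
    (continuous_intervalIntegral_of_continuousOn_Icc_prod hxinv htS)
    (fun θ => intervalIntegral_pos_of_pos_on
      (intervalIntegrable_of_continuousOn_Icc_prod hxinv htS θ)
      (fun τ hτ => inv_pos.2 (pow_pos (hxpos τ (hS ⟨hτ.1.le, hτ.2.le.trans htt'.le⟩) θ) 2)) ht0)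
    (hy t htS)
    (fun θ _ => mul_nonneg hσ.le <| integral_nonneg ht0.le fun τ hτ =>
      Real.rpow_nonneg (hxpos τ (hS ⟨hτ.1, hτ.2.trans htt'.le⟩) θ).le _)
    (fun θ _ => by rw [hyform t ht θ]; ring)
    hxt_div (fun θ _ => hang t ht θ)

/-- under hypothesis (H) plus the angular momentum identity
x y_t - y x_t = m₀, if m₀ ≤ 0 on [a,d] and m₀ < 0 on (a,b) (a < b ≤ d), then for
t ∈ (0,T): y(t,·) < 0 on (a,b) and
∫_a^b x_t/x ≤ ∫_a^b y_t/y - N / x(t,b)², N = (2/γ)(∫_a^b √|m₀|)². -/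
theorem stmt_13
    -- hypothesis (H)
    (γ σ : ℝ) (hγ : 0 < γ) (hσ : 0 < σ)
    (T : EReal) (hT : 0 < T)
    (J : Set ℝ) (hJ : J = {t : ℝ | 0 ≤ t ∧ (t : EReal) < T})
    (m₀ : ℝ → ℝ) (hm₀cont : Continuous m₀) (hm₀per : ∀ θ : ℝ, m₀ (θ + 1) = m₀ θ)
    (x y xθ : ℝ → ℝ → ℝ)
    (hxcont : ContinuousOn (fun p : ℝ × ℝ => x p.1 p.2) (J ×ˢ univ))
    (hycont : ContinuousOn (fun p : ℝ × ℝ => y p.1 p.2) (J ×ˢ univ))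
    (hxper : ∀ t ∈ J, ∀ θ : ℝ, x t (θ + 1) = x t θ)
    (hyper : ∀ t ∈ J, ∀ θ : ℝ, y t (θ + 1) = y t θ)
    (hxθ : ∀ t ∈ J, ∀ θ : ℝ, HasDerivAt (x t) (xθ t θ) θ)
    (hyC1 : ∀ t ∈ J, ∀ θ : ℝ, DifferentiableAt ℝ (y t) θ)
    (hxpos : ∀ t ∈ J, ∀ θ : ℝ, 0 < x t θ)
    (hy0 : ∀ θ : ℝ, y 0 θ = 0)
    (hyform : ∀ t ∈ J, ∀ θ : ℝ,
      y t θ = -γ * xθ t θ + σ * x t θ * ∫ τ in (0:ℝ)..t, x τ θ ^ γ)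
    (hratio : ∀ θ : ℝ, ∀ t ∈ J,
      HasDerivWithinAt (fun s => y s θ / x s θ) (m₀ θ / x t θ ^ 2) J t)
    (hxint : ∀ t ∈ J, (∫ θ in (0:ℝ)..1, x t θ ^ γ) = 1)
    -- x and y are C¹ in t
    (xt yt : ℝ → ℝ → ℝ)
    (hxt : ∀ θ : ℝ, ∀ t ∈ J, HasDerivWithinAt (fun s => x s θ) (xt t θ) J t)
    (hyt : ∀ θ : ℝ, ∀ t ∈ J, HasDerivWithinAt (fun s => y s θ) (yt t θ) J t)
    -- conserved angular momentum
    (hang : ∀ t ∈ J, ∀ θ : ℝ, x t θ * yt t θ - y t θ * xt t θ = m₀ θ)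
    -- points a < b ≤ d in [0,1] with m₀ ≤ 0 on [a,d] and m₀ < 0 on (a,b)
    (a b d : ℝ) (ha : 0 ≤ a) (hab : a < b) (hbd : b ≤ d) (hd : d ≤ 1)
    (hm : ∀ θ ∈ Icc a d, m₀ θ ≤ 0)
    (hmneg : ∀ θ ∈ Ioo a b, m₀ θ < 0) :
    ∀ t ∈ J, 0 < t →
      (∀ θ ∈ Ioo a b, y t θ < 0) ∧
      (∫ θ in a..b, xt t θ / x t θ)
        ≤ (∫ θ in a..b, yt t θ / y t θ)
          - (2 / γ) * (∫ θ in a..b, Real.sqrt |m₀ θ|) ^ 2 / x t b ^ 2 :=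
  stmt_13_general γ σ hγ hσ T J hJ m₀ hm₀cont x y xθ hxcont hxθ hxpos hy0 hyform hratio xt yt hxt
    hang a b hab hmneg
end
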